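/- arXiv:2410.23852 — 9 statements merged into one kernel-verified Lean document; each statement's English description precedes it below -/
import Mathlib

section
/- Under the dyadic fixed-effects setup, for all α, α′ ∈ D such that r(α) ∈ D and r(α′) ∈ D, one has ‖r(r(α)) − r(r(α′))‖₁ ≤ (1 − (2(n−2)/(n−1))·δ²)·‖α − α′‖₁, where δ = c₁c₂. (Two-step ℓ₁-contraction of the degree-matching iteration map; core of Theorem 3.1.) -/
/-!
Write `ε = 1 / (n - 1)`. For a weight matrix `B` let `J(B)` have entries
`J(B)ᵢᵢ = 1 - ε ∑_{j ≠ i} Bᵢⱼ` and `J(B)ᵢₘ = -ε Bₘᵢ`; with `Bᵢⱼ = fᵢⱼ Fⱼᵢ` this is the Jacobian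
of `r`. The mean value theorem, applied to each factor of `Fᵢⱼ Fⱼᵢ`, gives
`r u - r u' = J(A) (u - u')` for weights `A` with off-diagonal entries in `[δ, 1 - δ]`, hence
`r (r α) - r (r α') = J(B) J(C) (α - α')`.

Such a `J(B)` has nonnegative diagonal, nonpositive off-diagonal entries and absolute column
sums `1`. An off-diagonal entry of `J(B) J(C)` is a sum of `n - 2` positive terms and two
negative ones, and both parts are at least `(n - 2) ε² δ²`; this cancellation lowers every
absolute column sum, the `ℓ₁` operator norm, to `1 - 2 (n - 2) δ² / (n - 1)`.
-/

open Finset Matrix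

theorem abs_sum_le_sum_abs_sub_two_mul {κ : Type*} (s : Finset κ) (p : κ → Prop)
    [DecidablePred p] (t : κ → ℝ) {m : ℝ}
    (hpos : ∀ k ∈ s, p k → 0 ≤ t k) (hneg : ∀ k ∈ s, ¬p k → t k ≤ 0)
    (hm : m ≤ ∑ k ∈ s with p k, t k) (hm' : m ≤ -∑ k ∈ s with ¬p k, t k) :
    |∑ k ∈ s, t k| ≤ ∑ k ∈ s, |t k| - 2 * m := by
  have habs_pos : ∑ k ∈ s with p k, |t k| = ∑ k ∈ s with p k, t k :=
    sum_congr rfl fun k hk => abs_of_nonneg (hpos k (mem_filter.1 hk).1 (mem_filter.1 hk).2)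
  have habs_neg : ∑ k ∈ s with ¬p k, |t k| = -∑ k ∈ s with ¬p k, t k := by
    rw [← sum_neg_distrib]
    exact sum_congr rfl fun k hk =>
      abs_of_nonpos (hneg k (mem_filter.1 hk).1 (mem_filter.1 hk).2)
  rw [← sum_filter_add_sum_filter_not s p, ← sum_filter_add_sum_filter_not s p (fun k => |t k|),
    habs_pos, habs_neg, abs_le]
  constructor <;> linarith

theorem sum_abs_mulVec_le {ι κ : Type*} [Fintype ι] [Fintype κ] {M : Matrix ι κ ℝ} {ρ : ℝ}
    (hM : ∀ j, ∑ i, |M i j| ≤ ρ) (v : κ → ℝ) :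
    ∑ i, |(M *ᵥ v) i| ≤ ρ * ∑ j, |v j| := by
  calc ∑ i, |(M *ᵥ v) i| ≤ ∑ i, ∑ j, |M i j| * |v j| := by
        refine sum_le_sum fun i _ => ?_
        simpa only [mulVec, dotProduct, abs_mul] using
          abs_sum_le_sum_abs (fun j => M i j * v j) univ
    _ = ∑ j, (∑ i, |M i j|) * |v j| := by
        rw [sum_comm]
        simp only [sum_mul]
    _ ≤ ∑ j, ρ * |v j| := sum_le_sum fun j _ => mul_le_mul_of_nonneg_right (hM j) (abs_nonneg _)
    _ = ρ * ∑ j, |v j| := (mul_sum _ _ _).symm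

theorem mul_mem_Icc_mul_one_sub_mul {a b x y : ℝ} (ha : 0 ≤ a) (hb : 0 ≤ b)
    (hx : x ∈ Set.Icc a (1 - a)) (hy : y ∈ Set.Icc b (1 - b)) :
    x * y ∈ Set.Icc (a * b) (1 - a * b) := by
  obtain ⟨hax, hxa⟩ := hx
  obtain ⟨hby, hyb⟩ := hy
  constructor <;> nlinarith [mul_le_mul hax hby hb (ha.trans hax)]

theorem exists_sub_eq_mul_sub_of_hasDerivAt {F f : ℝ → ℝ} (hFf : ∀ t, HasDerivAt F (f t) t)
    (a b : ℝ) : ∃ s ∈ Set.Icc (0 : ℝ) 1, F b - F a = f (a + s * (b - a)) * (b - a) := by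
  have hderiv : ∀ s, HasDerivAt (fun s => F (a + s * (b - a)))
      (f (a + s * (b - a)) * (b - a)) s := fun s =>
    (hFf _).comp s (((hasDerivAt_id s).mul_const (b - a)).const_add a |>.congr_deriv (one_mul _))
  have hcont : Continuous fun s => F (a + s * (b - a)) :=
    continuous_iff_continuousAt.2 fun s => (hderiv s).continuousAt
  obtain ⟨s, hs, hslope⟩ :=
    exists_hasDerivAt_eq_slope _ _ zero_lt_one hcont.continuousOn fun s _ => hderiv s
  exact ⟨s, Set.Ioo_subset_Icc_self hs, by simpa using hslope.symm⟩

theorem card_sub_one_pos {ι : Type*} [Fintype ι] [Nontrivial ι] :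
    (0 : ℝ) < (Fintype.card ι : ℝ) - 1 := by
  have : (1 : ℝ) < Fintype.card ι := by exact_mod_cast Fintype.one_lt_card
  linarith

theorem card_erase_eq_card_sub_one {ι : Type*} [Fintype ι] [Nonempty ι] [DecidableEq ι]
    (i : ι) : ((univ.erase i).card : ℝ) = (Fintype.card ι : ℝ) - 1 := by
  rw [card_erase_of_mem (mem_univ i), card_univ, Nat.cast_sub Fintype.card_pos, Nat.cast_one]

theorem filter_not_ne_and_ne {ι : Type*} [Fintype ι] [DecidableEq ι] (i j : ι) :
    (univ.filter fun k => ¬(k ≠ i ∧ k ≠ j)) = {i, j} := by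
  ext k
  simp only [mem_filter, mem_univ, true_and, mem_insert, mem_singleton]
  tauto

theorem card_filter_ne_and_ne {ι : Type*} [Fintype ι] [DecidableEq ι] {i j : ι} (hij : i ≠ j) :
    ((univ.filter fun k => k ≠ i ∧ k ≠ j).card : ℝ) = (Fintype.card ι : ℝ) - 2 := by
  have h := card_filter_add_card_filter_not (s := univ) fun k => k ≠ i ∧ k ≠ j
  rw [filter_not_ne_and_ne, card_pair hij, card_univ] at h
  rw [← h]
  push_cast
  ring

section DegreeJacobian

variable {ι : Type*} [Fintype ι] [DecidableEq ι]

noncomputable def degreeJacobian (B : Matrix ι ι ℝ) : Matrix ι ι ℝ :=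
  Matrix.of fun i m =>
    if i = m then 1 - 1 / ((Fintype.card ι : ℝ) - 1) * ∑ j ∈ univ.erase i, B i j
    else -(1 / ((Fintype.card ι : ℝ) - 1) * B m i)

theorem degreeJacobian_self (B : Matrix ι ι ℝ) (i : ι) :
    degreeJacobian B i i =
      1 - 1 / ((Fintype.card ι : ℝ) - 1) * ∑ j ∈ univ.erase i, B i j := by
  simp [degreeJacobian]

theorem degreeJacobian_of_ne (B : Matrix ι ι ℝ) {i m : ι} (h : i ≠ m) :
    degreeJacobian B i m = -(1 / ((Fintype.card ι : ℝ) - 1) * B m i) := by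
  simp [degreeJacobian, h]

variable [Nontrivial ι] {δ : ℝ} {B C : Matrix ι ι ℝ}

theorem le_degreeJacobian_self (hB : ∀ i j, i ≠ j → B i j ∈ Set.Icc δ (1 - δ)) (i : ι) :
    δ ≤ degreeJacobian B i i := by
  have hsum : ∑ j ∈ univ.erase i, B i j ≤ ((Fintype.card ι : ℝ) - 1) * (1 - δ) := by
    rw [← card_erase_eq_card_sub_one i, ← nsmul_eq_mul]
    exact sum_le_card_nsmul _ _ _ fun j hj => (hB i j (ne_of_mem_erase hj).symm).2
  have hmean : 1 / ((Fintype.card ι : ℝ) - 1) * ∑ j ∈ univ.erase i, B i j ≤ 1 - δ := by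
    rw [div_mul_eq_mul_div, one_mul, div_le_iff₀ card_sub_one_pos]
    linarith
  rw [degreeJacobian_self]
  linarith

theorem abs_degreeJacobian_of_ne (hδ : 0 ≤ δ) (hB : ∀ i j, i ≠ j → B i j ∈ Set.Icc δ (1 - δ))
    {i m : ι} (h : i ≠ m) :
    |degreeJacobian B i m| = 1 / ((Fintype.card ι : ℝ) - 1) * B m i := by
  have hBmi : 0 ≤ B m i := hδ.trans (hB m i h.symm).1
  rw [degreeJacobian_of_ne B h, abs_neg,
    abs_of_nonneg (mul_nonneg (one_div_pos.2 card_sub_one_pos).le hBmi)]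

theorem sum_abs_degreeJacobian (hδ : 0 ≤ δ) (hB : ∀ i j, i ≠ j → B i j ∈ Set.Icc δ (1 - δ))
    (m : ι) : ∑ i, |degreeJacobian B i m| = 1 := by
  rw [← add_sum_erase _ _ (mem_univ m), abs_of_nonneg (hδ.trans (le_degreeJacobian_self hB m)),
    sum_congr rfl fun i hi => abs_degreeJacobian_of_ne hδ hB (ne_of_mem_erase hi), ← mul_sum,
    degreeJacobian_self]
  ring

theorem abs_degreeJacobian_mul_apply_le (hδ : 0 ≤ δ)
    (hB : ∀ i j, i ≠ j → B i j ∈ Set.Icc δ (1 - δ))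
    (hC : ∀ i j, i ≠ j → C i j ∈ Set.Icc δ (1 - δ)) {i j : ι} (hij : i ≠ j) :
    |(degreeJacobian B * degreeJacobian C) i j| ≤
      ∑ k, |degreeJacobian B i k| * |degreeJacobian C k j| -
        2 * (((Fintype.card ι : ℝ) - 2) * (δ / ((Fintype.card ι : ℝ) - 1)) ^ 2) := by
  set ε := 1 / ((Fintype.card ι : ℝ) - 1) with hε
  have hε_pos : 0 < ε := one_div_pos.2 card_sub_one_pos
  rw [mul_apply]
  simp only [← abs_mul]
  apply abs_sum_le_sum_abs_sub_two_mul univ (fun k => k ≠ i ∧ k ≠ j)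
  · rintro k - ⟨hki, hkj⟩
    rw [degreeJacobian_of_ne B hki.symm, degreeJacobian_of_ne C hkj, neg_mul_neg]
    exact mul_nonneg (mul_nonneg hε_pos.le (hδ.trans (hB k i hki).1))
      (mul_nonneg hε_pos.le (hδ.trans (hC j k hkj.symm).1))
  · intro k _ hk
    rcases not_and_or.1 hk with hki | hkj
    · rw [not_not.1 hki, degreeJacobian_of_ne C hij, mul_neg]
      exact neg_nonpos.2 (mul_nonneg (hδ.trans (le_degreeJacobian_self hB i))
        (mul_nonneg hε_pos.le (hδ.trans (hC j i hij.symm).1)))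
    · rw [not_not.1 hkj, degreeJacobian_of_ne B hij, neg_mul]
      exact neg_nonpos.2 (mul_nonneg (mul_nonneg hε_pos.le (hδ.trans (hB j i hij.symm).1))
        (hδ.trans (le_degreeJacobian_self hC j)))
  · rw [← card_filter_ne_and_ne hij, ← nsmul_eq_mul, div_eq_mul_one_div, mul_comm δ, ← hε, sq]
    refine card_nsmul_le_sum _ _ _ fun k hk => ?_
    obtain ⟨hki, hkj⟩ := (mem_filter.1 hk).2
    rw [degreeJacobian_of_ne B hki.symm, degreeJacobian_of_ne C hkj, neg_mul_neg]
    exact mul_le_mul (mul_le_mul_of_nonneg_left (hB k i hki).1 hε_pos.le)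
      (mul_le_mul_of_nonneg_left (hC j k hkj.symm).1 hε_pos.le)
      (mul_nonneg hε_pos.le hδ) (mul_nonneg hε_pos.le (hδ.trans (hB k i hki).1))
  · have hscale : ((Fintype.card ι : ℝ) - 2) * ε ≤ 1 := by
      rw [hε, mul_one_div, div_le_one card_sub_one_pos]
      linarith
    have hBji := (hB j i hij.symm).1
    have hCji := (hC j i hij.symm).1
    have hBii := le_degreeJacobian_self hB i
    have hCjj := le_degreeJacobian_self hC j
    rw [filter_not_ne_and_ne, sum_pair hij, degreeJacobian_of_ne C hij, degreeJacobian_of_ne B hij,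
      div_eq_mul_one_div, mul_comm δ, ← hε]
    linarith [mul_le_mul hBii (mul_le_mul_of_nonneg_left hCji hε_pos.le) (mul_nonneg hε_pos.le hδ)
        (hδ.trans hBii),
      mul_le_mul (mul_le_mul_of_nonneg_left hBji hε_pos.le) hCjj hδ
        (mul_nonneg hε_pos.le (hδ.trans hBji)),
      mul_le_mul_of_nonneg_right hscale (mul_nonneg (mul_nonneg hε_pos.le hδ) hδ),
      mul_nonneg (mul_nonneg hε_pos.le hδ) hδ]

theorem sum_abs_degreeJacobian_mul_le (hδ : 0 ≤ δ)
    (hB : ∀ i j, i ≠ j → B i j ∈ Set.Icc δ (1 - δ))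
    (hC : ∀ i j, i ≠ j → C i j ∈ Set.Icc δ (1 - δ)) (j : ι) :
    ∑ i, |(degreeJacobian B * degreeJacobian C) i j| ≤
      1 - 2 * ((Fintype.card ι : ℝ) - 2) / ((Fintype.card ι : ℝ) - 1) * δ ^ 2 := by
  set t := fun i => ∑ k, |degreeJacobian B i k| * |degreeJacobian C k j| with ht
  have htotal : ∑ i, t i = 1 := by
    rw [ht, sum_comm]
    simp only [← sum_mul, sum_abs_degreeJacobian hδ hB, one_mul]
    exact sum_abs_degreeJacobian hδ hC j
  have hdiag : |(degreeJacobian B * degreeJacobian C) j j| ≤ t j := by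
    simpa only [mul_apply, abs_mul] using
      abs_sum_le_sum_abs (fun k => degreeJacobian B j k * degreeJacobian C k j) univ
  calc ∑ i, |(degreeJacobian B * degreeJacobian C) i j|
      ≤ t j + ∑ i ∈ univ.erase j,
          (t i - 2 * (((Fintype.card ι : ℝ) - 2) * (δ / ((Fintype.card ι : ℝ) - 1)) ^ 2)) := by
        rw [← add_sum_erase _ _ (mem_univ j)]
        exact add_le_add hdiag
          (sum_le_sum fun i hi => abs_degreeJacobian_mul_apply_le hδ hB hC (ne_of_mem_erase hi))
    _ = 1 - 2 * ((Fintype.card ι : ℝ) - 2) / ((Fintype.card ι : ℝ) - 1) * δ ^ 2 := by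
        rw [sum_sub_distrib, sum_const, nsmul_eq_mul, card_erase_eq_card_sub_one,
          add_sub_assoc', add_sum_erase _ _ (mem_univ j), htotal]
        field_simp [card_sub_one_pos.ne']

theorem sum_abs_degreeJacobian_mulVec_mulVec_le (hδ : 0 ≤ δ)
    (hB : ∀ i j, i ≠ j → B i j ∈ Set.Icc δ (1 - δ))
    (hC : ∀ i j, i ≠ j → C i j ∈ Set.Icc δ (1 - δ)) (v : ι → ℝ) :
    ∑ i, |(degreeJacobian B *ᵥ degreeJacobian C *ᵥ v) i| ≤
      (1 - 2 * ((Fintype.card ι : ℝ) - 2) / ((Fintype.card ι : ℝ) - 1) * δ ^ 2) *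
        ∑ i, |v i| := by
  rw [mulVec_mulVec]
  exact sum_abs_mulVec_le (sum_abs_degreeJacobian_mul_le hδ hB hC) v

end DegreeJacobian

section DegreeMap

variable {ι : Type*} [Fintype ι] [DecidableEq ι] {F f : ℝ → ℝ} {c : ι → ι → ℝ} {d : ι → ℝ}

noncomputable def degreeMap (F : ℝ → ℝ) (c : ι → ι → ℝ) (d : ι → ℝ) (α : ι → ℝ) (i : ι) :
    ℝ :=
  α i + 1 / ((Fintype.card ι : ℝ) - 1) *
    (d i - ∑ j ∈ univ.erase i, F (α i + c i j) * F (α j + c j i))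

theorem degreeMap_sub_eq_degreeJacobian_mulVec {A : Matrix ι ι ℝ} {u u' : ι → ℝ}
    (hA : ∀ i j, i ≠ j →
      F (u i + c i j) * F (u j + c j i) - F (u' i + c i j) * F (u' j + c j i) =
        A i j * (u i - u' i) + A j i * (u j - u' j)) :
    degreeMap F c d u - degreeMap F c d u' = degreeJacobian A *ᵥ (u - u') := by
  funext i
  set ε := 1 / ((Fintype.card ι : ℝ) - 1)
  have hpairs : ∑ j ∈ univ.erase i, F (u i + c i j) * F (u j + c j i) -
      ∑ j ∈ univ.erase i, F (u' i + c i j) * F (u' j + c j i) =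
        (∑ j ∈ univ.erase i, A i j) * (u i - u' i) +
          ∑ j ∈ univ.erase i, A j i * (u j - u' j) := by
    rw [← sum_sub_distrib, sum_mul, ← sum_add_distrib]
    exact sum_congr rfl fun j hj => hA i j (ne_of_mem_erase hj).symm
  have hoff : ∑ j ∈ univ.erase i, degreeJacobian A i j * (u - u') j =
      -(ε * ∑ j ∈ univ.erase i, A j i * (u j - u' j)) := by
    rw [mul_sum, ← sum_neg_distrib]
    refine sum_congr rfl fun j hj => ?_
    rw [degreeJacobian_of_ne A (ne_of_mem_erase hj).symm, Pi.sub_apply]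
    ring
  rw [Pi.sub_apply, mulVec, dotProduct, ← add_sum_erase _ _ (mem_univ i), hoff,
    degreeJacobian_self, degreeMap, degreeMap, Pi.sub_apply]
  linear_combination (-ε) * hpairs

theorem exists_degreeMap_sub_eq_degreeJacobian_mulVec (hFf : ∀ t, HasDerivAt F (f t) t)
    {c₁ c₂ : ℝ} (hc₁ : 0 ≤ c₁) (hc₂ : 0 ≤ c₂) {D : Set (ι → ℝ)} (hD : Convex ℝ D)
    (hF : ∀ α ∈ D, ∀ i j, i ≠ j → F (α i + c i j) ∈ Set.Icc c₁ (1 - c₁))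
    (hf : ∀ α ∈ D, ∀ i j, i ≠ j → f (α i + c i j) ∈ Set.Icc c₂ (1 - c₂))
    {u u' : ι → ℝ} (hu : u ∈ D) (hu' : u' ∈ D) :
    ∃ A : Matrix ι ι ℝ, (∀ i j, i ≠ j → A i j ∈ Set.Icc (c₁ * c₂) (1 - c₁ * c₂)) ∧
      degreeMap F c d u - degreeMap F c d u' = degreeJacobian A *ᵥ (u - u') := by
  choose s hs hmvt using fun i j =>
    exists_sub_eq_mul_sub_of_hasDerivAt hFf (u' i + c i j) (u i + c i j)
  have hsegment : ∀ i j, u' i + c i j + s i j * (u i + c i j - (u' i + c i j)) =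
      (u' + s i j • (u - u')) i + c i j := fun i j => by
    simp only [Pi.add_apply, Pi.smul_apply, Pi.sub_apply, smul_eq_mul]
    ring
  -- `ab - a'b' = (a - a')(b + b')/2 + (a + a')/2 (b - b')` is symmetric in the pair `{i, j}`,
  -- so rows `i` and `j` of `r` see the same weights.
  refine ⟨fun i j =>
      (F (u j + c j i) + F (u' j + c j i)) / 2 * f ((u' + s i j • (u - u')) i + c i j),
    fun i j hij => ?_, degreeMap_sub_eq_degreeJacobian_mulVec fun i j hij => ?_⟩
  · have hFu := hF u hu j i hij.symm
    have hFu' := hF u' hu' j i hij.symm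
    refine mul_mem_Icc_mul_one_sub_mul hc₁ hc₂ ⟨?_, ?_⟩
      (hf _ (hD.add_smul_sub_mem hu' hu (hs i j)) i j hij)
    · linarith [hFu.1, hFu'.1]
    · linarith [hFu.2, hFu'.2]
  · have hi := hmvt i j
    have hj := hmvt j i
    rw [hsegment] at hi hj
    linear_combination (F (u j + c j i) + F (u' j + c j i)) / 2 * hi +
      (F (u i + c i j) + F (u' i + c i j)) / 2 * hj

end DegreeMap

theorem two_step_l1_contraction_general
    (n K : ℕ) (hn : 2 ≤ n)
    (c₁ c₂ : ℝ) (hc₁ : c₁ ∈ Set.Ioc (0 : ℝ) (1 / 2)) (hc₂ : c₂ ∈ Set.Ioc (0 : ℝ) (1 / 2))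
    (F f : ℝ → ℝ) (hFf : ∀ t : ℝ, HasDerivAt F (f t) t)
    (β : Fin K → ℝ) (x : Fin n → Fin n → Fin K → ℝ) (d : Fin n → ℝ)
    (D : Set (Fin n → ℝ)) (hDconv : Convex ℝ D)
    (hFbound : ∀ α ∈ D, ∀ i j : Fin n, i ≠ j →
      F (α i + ∑ k, x i j k * β k) ∈ Set.Icc c₁ (1 - c₁))
    (hfbound : ∀ α ∈ D, ∀ i j : Fin n, i ≠ j →
      f (α i + ∑ k, x i j k * β k) ∈ Set.Icc c₂ (1 - c₂))
    (r : (Fin n → ℝ) → Fin n → ℝ)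
    (hr : ∀ α : Fin n → ℝ, ∀ i : Fin n,
      r α i = α i + (1 / ((n : ℝ) - 1)) *
        (d i - ∑ j ∈ univ.erase i,
          F (α i + ∑ k, x i j k * β k) * F (α j + ∑ k, x j i k * β k)))
    (α α' : Fin n → ℝ) (hα : α ∈ D) (hα' : α' ∈ D)
    (hrα : r α ∈ D) (hrα' : r α' ∈ D) :
    ∑ i, |r (r α) i - r (r α') i| ≤
      (1 - (2 * ((n : ℝ) - 2) / ((n : ℝ) - 1)) * (c₁ * c₂) ^ 2) *
        ∑ i, |α i - α' i| := by
  have : Nontrivial (Fin n) := Fin.nontrivial_iff_two_le.2 hn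
  obtain rfl : r = degreeMap F (fun i j => ∑ k, x i j k * β k) d := by
    funext α i
    rw [hr, degreeMap, Fintype.card_fin]
  obtain ⟨B, hB, hrB⟩ := exists_degreeMap_sub_eq_degreeJacobian_mulVec hFf hc₁.1.le hc₂.1.le
    hDconv hFbound hfbound hrα hrα'
  obtain ⟨C, hC, hrC⟩ := exists_degreeMap_sub_eq_degreeJacobian_mulVec hFf hc₁.1.le hc₂.1.le
    hDconv hFbound hfbound hα hα'
  have hcontract :=
    sum_abs_degreeJacobian_mulVec_mulVec_le (mul_pos hc₁.1 hc₂.1).le hB hC (α - α')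
  rw [← hrC, ← hrB, Fintype.card_fin] at hcontract
  simpa only [Pi.sub_apply] using hcontract

/-- Two-step ℓ₁-contraction of the degree-matching iteration map
(core of Theorem 3.1 of the dyadic NTU network formation paper). -/
theorem two_step_l1_contraction
    (n K : ℕ) (hn : 2 ≤ n) (hK : 1 ≤ K)
    (c₁ c₂ : ℝ) (hc₁ : c₁ ∈ Set.Ioc (0 : ℝ) (1 / 2)) (hc₂ : c₂ ∈ Set.Ioc (0 : ℝ) (1 / 2))
    (F f : ℝ → ℝ) (hFf : ∀ t : ℝ, HasDerivAt F (f t) t)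
    (β : Fin K → ℝ) (x : Fin n → Fin n → Fin K → ℝ) (d : Fin n → ℝ)
    (D : Set (Fin n → ℝ)) (hDne : D.Nonempty) (hDconv : Convex ℝ D)
    (hFbound : ∀ α ∈ D, ∀ i j : Fin n, i ≠ j →
      F (α i + ∑ k, x i j k * β k) ∈ Set.Icc c₁ (1 - c₁))
    (hfbound : ∀ α ∈ D, ∀ i j : Fin n, i ≠ j →
      f (α i + ∑ k, x i j k * β k) ∈ Set.Icc c₂ (1 - c₂))
    (r : (Fin n → ℝ) → Fin n → ℝ)
    (hr : ∀ α : Fin n → ℝ, ∀ i : Fin n,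
      r α i = α i + (1 / ((n : ℝ) - 1)) *
        (d i - ∑ j ∈ univ.erase i,
          F (α i + ∑ k, x i j k * β k) * F (α j + ∑ k, x j i k * β k)))
    (α α' : Fin n → ℝ) (hα : α ∈ D) (hα' : α' ∈ D)
    (hrα : r α ∈ D) (hrα' : r α' ∈ D) :
    ∑ i, |r (r α) i - r (r α') i| ≤
      (1 - (2 * ((n : ℝ) - 2) / ((n : ℝ) - 1)) * (c₁ * c₂) ^ 2) *
        ∑ i, |α i - α' i| :=
  two_step_l1_contraction_general n K hn c₁ c₂ hc₁ hc₂ F f hFf β x d D hDconv hFbound hfbound r hr α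
    α' hα hα' hrα hrα'
end

section
/- Under the dyadic fixed-effects setup, suppose α̂ ∈ D satisfies r(α̂) = α̂, and (α^k)_{k≥0} is a sequence with α^0 ∈ D, α^{k+1} = r(α^k) for all k ≥ 0, and α^k ∈ D for all k ≥ 0. Then for every k ≥ 0, ‖α^{k+2} − α̂‖₁ ≤ (1 − (2(n−2)/(n−1))·δ²)·‖α^k − α̂‖₁, and for every k ≥ 1, ‖α^{k+2} − α^{k+1}‖₁ ≤ (1 − (2(n−2)/(n−1))·δ²)·‖α^k − α^{k−1}‖₁, where δ = c₁c₂. (Geometric decay of the fixed-point iterates in Theorem 3.1.) -/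
open Finset


noncomputable def Mx (n : ℕ) (a : Fin n → Fin n → ℝ) : Fin n → Fin n → ℝ :=
  fun i j => if i = j then 1 - (∑ m ∈ Finset.univ.erase i, a i m) / ((n:ℝ)-1)
    else -(a j i) / ((n:ℝ)-1)

section Core

variable {n : ℕ} {δ : ℝ}

lemma hn1R (hn : 2 ≤ n) : (0:ℝ) < (n:ℝ) - 1 := by
  have : (2:ℝ) ≤ n := by exact_mod_cast hn
  linarith

lemma card_eraseR (hn : 2 ≤ n) (i : Fin n) :
    ((Finset.univ.erase i).card : ℝ) = (n:ℝ) - 1 := by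
  rw [Finset.card_erase_of_mem (mem_univ i), Finset.card_univ, Fintype.card_fin]
  have h1 : 1 ≤ n := by omega
  push_cast [h1]
  ring

lemma Mx_diag (hn : 2 ≤ n) (a : Fin n → Fin n → ℝ)
    (ha : ∀ i j : Fin n, i ≠ j → δ ≤ a i j ∧ a i j ≤ 1 - δ) (i : Fin n) :
    δ ≤ Mx n a i i := by
  have hn1 := hn1R hn
  have hsum : ∑ m ∈ univ.erase i, a i m ≤ ((n:ℝ) - 1) * (1 - δ) := by
    calc ∑ m ∈ univ.erase i, a i m ≤ ∑ m ∈ univ.erase i, (1 - δ) :=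
        Finset.sum_le_sum (fun m hm => (ha i m (Ne.symm (Finset.ne_of_mem_erase hm))).2)
      _ = ((n:ℝ) - 1) * (1 - δ) := by
        rw [Finset.sum_const, nsmul_eq_mul, card_eraseR hn]
  have : (∑ m ∈ univ.erase i, a i m) / ((n:ℝ)-1) ≤ 1 - δ := by
    rw [div_le_iff₀ hn1]; linarith [hsum]
  simp only [Mx, eq_self_iff_true, if_true]
  linarith

lemma Mx_off (hn : 2 ≤ n) (a : Fin n → Fin n → ℝ) {i j : Fin n} (h : i ≠ j) :
    Mx n a i j = -(a j i) / ((n:ℝ)-1) := by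
  simp only [Mx, if_neg h]

lemma Mx_off_abs (hn : 2 ≤ n) (a : Fin n → Fin n → ℝ)
    (ha : ∀ i j : Fin n, i ≠ j → δ ≤ a i j ∧ a i j ≤ 1 - δ) (hδ : 0 < δ)
    {i j : Fin n} (h : i ≠ j) :
    |Mx n a i j| = a j i / ((n:ℝ)-1) := by
  have hn1 := hn1R hn
  rw [Mx_off hn a h, abs_div, abs_neg, abs_of_pos hn1,
    abs_of_pos (lt_of_lt_of_le hδ (ha j i h.symm).1)]

lemma Mx_diag_abs (hn : 2 ≤ n) (a : Fin n → Fin n → ℝ)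
    (ha : ∀ i j : Fin n, i ≠ j → δ ≤ a i j ∧ a i j ≤ 1 - δ) (hδ : 0 < δ) (i : Fin n) :
    |Mx n a i i| = Mx n a i i :=
  abs_of_pos (lt_of_lt_of_le hδ (Mx_diag hn a ha i))

lemma Mx_colsum (hn : 2 ≤ n) (a : Fin n → Fin n → ℝ)
    (ha : ∀ i j : Fin n, i ≠ j → δ ≤ a i j ∧ a i j ≤ 1 - δ) (hδ : 0 < δ) (j : Fin n) :
    ∑ i, |Mx n a i j| = 1 := by
  have hn1 := hn1R hn
  rw [← Finset.sum_erase_add univ _ (mem_univ j)]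
  have h1 : ∑ i ∈ univ.erase j, |Mx n a i j| = (∑ i ∈ univ.erase j, a j i) / ((n:ℝ)-1) := by
    rw [Finset.sum_div]
    exact Finset.sum_congr rfl (fun i hi => Mx_off_abs hn a ha hδ (Finset.ne_of_mem_erase hi))
  rw [h1, Mx_diag_abs hn a ha hδ]
  simp only [Mx, eq_self_iff_true, if_true]
  ring

lemma Mx_mulVec (hn : 2 ≤ n) (a : Fin n → Fin n → ℝ) (e e' : Fin n → ℝ)
    (he' : ∀ i, e' i = e i - (1/((n:ℝ)-1)) *
      ∑ j ∈ univ.erase i, (a i j * e i + a j i * e j)) (i : Fin n) :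
    e' i = ∑ j, Mx n a i j * e j := by
  rw [← Finset.sum_erase_add univ _ (mem_univ i), he' i]
  have h1 : ∑ j ∈ univ.erase i, Mx n a i j * e j
      = -(1/((n:ℝ)-1)) * ∑ j ∈ univ.erase i, a j i * e j := by
    rw [Finset.mul_sum]
    refine Finset.sum_congr rfl (fun j hj => ?_)
    rw [Mx_off hn a (Ne.symm (Finset.ne_of_mem_erase hj))]
    ring
  rw [h1, Finset.sum_add_distrib, ← Finset.sum_mul]
  simp only [Mx, eq_self_iff_true, if_true]
  ring


lemma abs_sub_le_add_sub {P Q m : ℝ} (hP : m ≤ P) (hQ : m ≤ Q) :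
    |P - Q| ≤ P + Q - 2*m := by
  rw [abs_sub_le_iff]; constructor <;> linarith

lemma card_erase2R (hn : 2 ≤ n) {j k : Fin n} (hjk : j ≠ k) :
    ((((univ : Finset (Fin n)).erase k).erase j).card : ℝ) = (n:ℝ) - 2 := by
  rw [Finset.card_erase_of_mem (Finset.mem_erase.mpr ⟨hjk, mem_univ j⟩),
    Finset.card_erase_of_mem (mem_univ k), Finset.card_univ, Fintype.card_fin]
  have h2 : n - 1 - 1 = n - 2 := by omega
  rw [h2, Nat.cast_sub hn]
  push_cast
  ring

lemma prod_col_bound (hn : 2 ≤ n) (hδ : 0 < δ)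
    (a a' : Fin n → Fin n → ℝ)
    (ha : ∀ i j : Fin n, i ≠ j → δ ≤ a i j ∧ a i j ≤ 1 - δ)
    (ha' : ∀ i j : Fin n, i ≠ j → δ ≤ a' i j ∧ a' i j ≤ 1 - δ)
    (j : Fin n) :
    ∑ k, |∑ l, Mx n a' k l * Mx n a l j| ≤
      1 - 2 * ((n:ℝ)-2) / ((n:ℝ)-1) * δ^2 := by
  have hn1 := hn1R hn
  set m : ℝ := ((n:ℝ)-2) * δ^2 / ((n:ℝ)-1)^2 with hm
  have hn2 : (0:ℝ) ≤ (n:ℝ) - 2 := by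
    have : (2:ℝ) ≤ n := by exact_mod_cast hn
    linarith
  -- per-entry bound for k ≠ j
  have key : ∀ k ∈ univ.erase j, |∑ l, Mx n a' k l * Mx n a l j| ≤
      (∑ l, |Mx n a' k l| * |Mx n a l j|) - 2*m := by
    intro k hk
    have hkj : k ≠ j := Finset.ne_of_mem_erase hk
    have hjk : j ≠ k := hkj.symm
    have hjmem : j ∈ (univ : Finset (Fin n)).erase k := Finset.mem_erase.mpr ⟨hjk, mem_univ j⟩
    set T := (((univ : Finset (Fin n)).erase k).erase j) with hT
    have hsplit : ∀ g : Fin n → ℝ, ∑ l, g l = (∑ l ∈ T, g l) + g j + g k := by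
      intro g
      rw [← Finset.sum_erase_add univ g (mem_univ k), ← Finset.sum_erase_add _ g hjmem]
    set P : ℝ := ∑ l ∈ T, a' l k * a j l / ((n:ℝ)-1)^2 with hPdef
    set Q : ℝ := a' j k / ((n:ℝ)-1) * Mx n a j j + Mx n a' k k * (a j k / ((n:ℝ)-1)) with hQdef
    have hTP : ∑ l ∈ T, Mx n a' k l * Mx n a l j = P := by
      refine Finset.sum_congr rfl (fun l hl => ?_)
      have hlj : l ≠ j := Finset.ne_of_mem_erase hl
      have hlk : l ≠ k := Finset.ne_of_mem_erase (Finset.mem_of_mem_erase hl)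
      rw [Mx_off hn a' hlk.symm, Mx_off hn a hlj, div_mul_div_comm, neg_mul_neg, ← pow_two]
    have hN : ∑ l, Mx n a' k l * Mx n a l j = P - Q := by
      rw [hsplit (fun l => Mx n a' k l * Mx n a l j), hTP,
        Mx_off hn a' hkj, Mx_off hn a hkj]
      ring
    have hPQ : ∑ l, |Mx n a' k l| * |Mx n a l j| = P + Q := by
      rw [hsplit (fun l => |Mx n a' k l| * |Mx n a l j|)]
      have h1 : ∑ l ∈ T, |Mx n a' k l| * |Mx n a l j| = P := by
        refine Finset.sum_congr rfl (fun l hl => ?_)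
        have hlj : l ≠ j := Finset.ne_of_mem_erase hl
        have hlk : l ≠ k := Finset.ne_of_mem_erase (Finset.mem_of_mem_erase hl)
        rw [Mx_off_abs hn a' ha' hδ hlk.symm, Mx_off_abs hn a ha hδ hlj,
          div_mul_div_comm, ← pow_two]
      rw [h1, Mx_off_abs hn a' ha' hδ hkj, Mx_off_abs hn a ha hδ hkj,
        Mx_diag_abs hn a ha hδ, Mx_diag_abs hn a' ha' hδ]
      ring
    have hmP : m ≤ P := by
      have : ∀ l ∈ T, δ^2 / ((n:ℝ)-1)^2 ≤ a' l k * a j l / ((n:ℝ)-1)^2 := by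
        intro l hl
        have hlj : l ≠ j := Finset.ne_of_mem_erase hl
        have hlk : l ≠ k := Finset.ne_of_mem_erase (Finset.mem_of_mem_erase hl)
        have h1 := (ha' l k hlk).1
        have h2 := (ha j l hlj.symm).1
        gcongr <;> nlinarith [hδ.le]
      calc m = (((T.card : ℝ))) * (δ^2 / ((n:ℝ)-1)^2) := by
              rw [hT, card_erase2R hn hjk, hm]; ring
        _ ≤ ∑ l ∈ T, a' l k * a j l / ((n:ℝ)-1)^2 := by
              have := Finset.card_nsmul_le_sum T
                (fun l => a' l k * a j l / ((n:ℝ)-1)^2) (δ^2 / ((n:ℝ)-1)^2) this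
              rwa [nsmul_eq_mul] at this
        _ = P := rfl
    have hmQ : m ≤ Q := by
      have h1 : δ * δ / ((n:ℝ)-1) ≤ a' j k / ((n:ℝ)-1) * Mx n a j j := by
        have hb1 := (ha' j k hjk).1
        have hb2 := Mx_diag hn a ha j
        rw [div_mul_eq_mul_div]
        gcongr
        nlinarith
      have h2 : δ * δ / ((n:ℝ)-1) ≤ Mx n a' k k * (a j k / ((n:ℝ)-1)) := by
        have hb1 := (ha j k hjk).1
        have hb2 := Mx_diag hn a' ha' k
        rw [mul_div_assoc']
        gcongr
        nlinarith
      have h3 : m ≤ 2 * (δ * δ / ((n:ℝ)-1)) := by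
        rw [hm, div_le_iff₀ (by positivity), mul_comm]
        have : 2 * (δ * δ / ((n:ℝ)-1)) * ((n:ℝ)-1)^2 = 2*((n:ℝ)-1)*δ^2 := by
          field_simp
        rw [this]
        nlinarith
      calc m ≤ 2 * (δ * δ / ((n:ℝ)-1)) := h3
        _ ≤ Q := by rw [hQdef]; linarith
    calc |∑ l, Mx n a' k l * Mx n a l j| = |P - Q| := by rw [hN]
      _ ≤ P + Q - 2*m := abs_sub_le_add_sub hmP hmQ
      _ = (∑ l, |Mx n a' k l| * |Mx n a l j|) - 2*m := by rw [hPQ]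
  -- sum over all k
  have hdiag : |∑ l, Mx n a' j l * Mx n a l j| ≤ ∑ l, |Mx n a' j l| * |Mx n a l j| := by
    calc |∑ l, Mx n a' j l * Mx n a l j| ≤ ∑ l, |Mx n a' j l * Mx n a l j| :=
        Finset.abs_sum_le_sum_abs _ _
      _ = ∑ l, |Mx n a' j l| * |Mx n a l j| := by simp [abs_mul]
  have htot : ∑ k, ∑ l, |Mx n a' k l| * |Mx n a l j| = 1 := by
    rw [Finset.sum_comm]
    have : ∀ l : Fin n, ∑ k, |Mx n a' k l| * |Mx n a l j| = |Mx n a l j| := by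
      intro l
      rw [← Finset.sum_mul, Mx_colsum hn a' ha' hδ l, one_mul]
    rw [Finset.sum_congr rfl (fun l _ => this l), Mx_colsum hn a ha hδ j]
  have hcard : ((univ.erase j).card : ℝ) = (n:ℝ) - 1 := card_eraseR hn j
  calc ∑ k, |∑ l, Mx n a' k l * Mx n a l j|
      = (∑ k ∈ univ.erase j, |∑ l, Mx n a' k l * Mx n a l j|)
        + |∑ l, Mx n a' j l * Mx n a l j| := by
        rw [Finset.sum_erase_add univ _ (mem_univ j)]
    _ ≤ (∑ k ∈ univ.erase j, ((∑ l, |Mx n a' k l| * |Mx n a l j|) - 2*m))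
        + ∑ l, |Mx n a' j l| * |Mx n a l j| := by
        exact add_le_add (Finset.sum_le_sum key) hdiag
    _ = (∑ k, ∑ l, |Mx n a' k l| * |Mx n a l j|) - ((n:ℝ)-1) * (2*m) := by
        rw [Finset.sum_sub_distrib, Finset.sum_const, nsmul_eq_mul, hcard]
        rw [← Finset.sum_erase_add univ (fun k => ∑ l, |Mx n a' k l| * |Mx n a l j|) (mem_univ j)]
        ring
    _ = 1 - ((n:ℝ)-1) * (2*m) := by rw [htot]
    _ = 1 - 2 * ((n:ℝ)-2) / ((n:ℝ)-1) * δ^2 := by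
        rw [hm]
        have hne : ((n:ℝ)-1) ≠ 0 := ne_of_gt hn1
        field_simp


lemma core_contract (hn : 2 ≤ n) (hδ : 0 < δ)
    (a a' : Fin n → Fin n → ℝ)
    (ha : ∀ i j : Fin n, i ≠ j → δ ≤ a i j ∧ a i j ≤ 1 - δ)
    (ha' : ∀ i j : Fin n, i ≠ j → δ ≤ a' i j ∧ a' i j ≤ 1 - δ)
    (e e' e'' : Fin n → ℝ)
    (he' : ∀ i, e' i = e i - (1/((n:ℝ)-1)) *
      ∑ j ∈ univ.erase i, (a i j * e i + a j i * e j))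
    (he'' : ∀ i, e'' i = e' i - (1/((n:ℝ)-1)) *
      ∑ j ∈ univ.erase i, (a' i j * e' i + a' j i * e' j)) :
    ∑ i, |e'' i| ≤ (1 - 2*((n:ℝ)-2)/((n:ℝ)-1)*δ^2) * ∑ i, |e i| := by
  have h1 : ∀ i, e' i = ∑ j, Mx n a i j * e j := Mx_mulVec hn a e e' he'
  have h2 : ∀ k, e'' k = ∑ l, Mx n a' k l * e' l := Mx_mulVec hn a' e' e'' he''
  have h3 : ∀ k, e'' k = ∑ j, (∑ l, Mx n a' k l * Mx n a l j) * e j := by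
    intro k
    rw [h2 k]
    calc ∑ l, Mx n a' k l * e' l
        = ∑ l, ∑ j, Mx n a' k l * (Mx n a l j * e j) := by
          refine Finset.sum_congr rfl fun l _ => ?_
          rw [h1 l, Finset.mul_sum]
      _ = ∑ j, ∑ l, Mx n a' k l * (Mx n a l j * e j) := Finset.sum_comm
      _ = ∑ j, (∑ l, Mx n a' k l * Mx n a l j) * e j := by
          refine Finset.sum_congr rfl fun j _ => ?_
          rw [Finset.sum_mul]
          exact Finset.sum_congr rfl fun l _ => by ring
  calc ∑ k, |e'' k|
      ≤ ∑ k, ∑ j, |∑ l, Mx n a' k l * Mx n a l j| * |e j| := by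
        refine Finset.sum_le_sum fun k _ => ?_
        rw [h3 k]
        calc |∑ j, (∑ l, Mx n a' k l * Mx n a l j) * e j|
            ≤ ∑ j, |(∑ l, Mx n a' k l * Mx n a l j) * e j| := Finset.abs_sum_le_sum_abs _ _
          _ = ∑ j, |∑ l, Mx n a' k l * Mx n a l j| * |e j| := by simp [abs_mul]
    _ = ∑ j, (∑ k, |∑ l, Mx n a' k l * Mx n a l j|) * |e j| := by
        rw [Finset.sum_comm]
        exact Finset.sum_congr rfl fun j _ => (Finset.sum_mul _ _ _).symm
    _ ≤ ∑ j, (1 - 2*((n:ℝ)-2)/((n:ℝ)-1)*δ^2) * |e j| :=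
        Finset.sum_le_sum fun j _ => mul_le_mul_of_nonneg_right
          (prod_col_bound hn hδ a a' ha ha' j) (abs_nonneg _)
    _ = (1 - 2*((n:ℝ)-2)/((n:ℝ)-1)*δ^2) * ∑ j, |e j| := (Finset.mul_sum _ _ _).symm

end Core

section StepA
variable {n K : ℕ}

lemma stepA
    (c₁ c₂ : ℝ) (hc₁ : c₁ ∈ Set.Ioc (0 : ℝ) (1 / 2)) (hc₂ : c₂ ∈ Set.Ioc (0 : ℝ) (1 / 2))
    (F f : ℝ → ℝ) (hFf : ∀ t : ℝ, HasDerivAt F (f t) t)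
    (β : Fin K → ℝ) (x : Fin n → Fin n → Fin K → ℝ) (d : Fin n → ℝ)
    (D : Set (Fin n → ℝ)) (hDconv : Convex ℝ D)
    (hFbound : ∀ α ∈ D, ∀ i j : Fin n, i ≠ j →
      F (α i + ∑ k, x i j k * β k) ∈ Set.Icc c₁ (1 - c₁))
    (hfbound : ∀ α ∈ D, ∀ i j : Fin n, i ≠ j →
      f (α i + ∑ k, x i j k * β k) ∈ Set.Icc c₂ (1 - c₂))
    (r : (Fin n → ℝ) → Fin n → ℝ)
    (hr : ∀ α : Fin n → ℝ, ∀ i : Fin n,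
      r α i = α i + (1 / ((n : ℝ) - 1)) *
        (d i - ∑ j ∈ univ.erase i,
          F (α i + ∑ k, x i j k * β k) * F (α j + ∑ k, x j i k * β k)))
    (α α' : Fin n → ℝ) (hα : α ∈ D) (hα' : α' ∈ D) :
    ∃ a : Fin n → Fin n → ℝ,
      (∀ i j : Fin n, i ≠ j → c₁ * c₂ ≤ a i j ∧ a i j ≤ 1 - c₁ * c₂) ∧
      (∀ i : Fin n, r α i - r α' i = (α i - α' i) - (1 / ((n : ℝ) - 1)) *
        ∑ j ∈ univ.erase i,
          (a i j * (α i - α' i) + a j i * (α j - α' j))) := by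
  obtain ⟨hc₁0, hc₁h⟩ := hc₁
  obtain ⟨hc₂0, hc₂h⟩ := hc₂
  have pair : ∀ i j : Fin n, ∃ u v : ℝ, i ≠ j →
      ((c₁ * c₂ ≤ u ∧ u ≤ 1 - c₁ * c₂) ∧ (c₁ * c₂ ≤ v ∧ v ≤ 1 - c₁ * c₂) ∧
        F (α i + ∑ k, x i j k * β k) * F (α j + ∑ k, x j i k * β k)
          - F (α' i + ∑ k, x i j k * β k) * F (α' j + ∑ k, x j i k * β k)
          = u * (α i - α' i) + v * (α j - α' j)) := by
    intro i j
    by_cases hij : i = j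
    · exact ⟨0, 0, fun h => absurd hij h⟩
    set s : ℝ := ∑ k, x i j k * β k with hs
    set s' : ℝ := ∑ k, x j i k * β k with hs'
    have hg : ∀ t : ℝ, HasDerivAt
        (fun θ : ℝ => F (α' i + θ * (α i - α' i) + s) * F (α' j + θ * (α j - α' j) + s'))
        (f (α' i + t * (α i - α' i) + s) * (α i - α' i) * F (α' j + t * (α j - α' j) + s')
          + F (α' i + t * (α i - α' i) + s) * (f (α' j + t * (α j - α' j) + s') * (α j - α' j))) t := by
      intro t
      have hL1 : HasDerivAt (fun θ : ℝ => α' i + θ * (α i - α' i) + s) (α i - α' i) t := by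
        simpa using (((hasDerivAt_id t).mul_const (α i - α' i)).const_add (α' i)).add_const s
      have hL2 : HasDerivAt (fun θ : ℝ => α' j + θ * (α j - α' j) + s') (α j - α' j) t := by
        simpa using (((hasDerivAt_id t).mul_const (α j - α' j)).const_add (α' j)).add_const s'
      exact ((hFf _).comp t hL1).mul ((hFf _).comp t hL2)
    obtain ⟨θ, hθ, heq⟩ := exists_hasDerivAt_eq_slope
      (fun θ : ℝ => F (α' i + θ * (α i - α' i) + s) * F (α' j + θ * (α j - α' j) + s'))
      (fun t : ℝ => f (α' i + t * (α i - α' i) + s) * (α i - α' i) * F (α' j + t * (α j - α' j) + s')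
        + F (α' i + t * (α i - α' i) + s) * (f (α' j + t * (α j - α' j) + s') * (α j - α' j)))
      zero_lt_one
      (fun t _ => (hg t).continuousAt.continuousWithinAt)
      (fun t _ => hg t)
    obtain ⟨hθ0, hθ1⟩ := Set.mem_Ioo.mp hθ
    have e1i : α' i + 1 * (α i - α' i) + s = α i + s := by ring
    have e1j : α' j + 1 * (α j - α' j) + s' = α j + s' := by ring
    have e0i : α' i + 0 * (α i - α' i) + s = α' i + s := by ring
    have e0j : α' j + 0 * (α j - α' j) + s' = α' j + s' := by ring
    rw [e1i, e1j, e0i, e0j] at heq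
    have γmem : ((1 - θ) • α' + θ • α : Fin n → ℝ) ∈ D :=
      hDconv hα' hα (by linarith) hθ0.le (by ring)
    have hγi : ((1 - θ) • α' + θ • α : Fin n → ℝ) i = α' i + θ * (α i - α' i) := by
      simp [Pi.add_apply, Pi.smul_apply, smul_eq_mul]; ring
    have hγj : ((1 - θ) • α' + θ • α : Fin n → ℝ) j = α' j + θ * (α j - α' j) := by
      simp [Pi.add_apply, Pi.smul_apply, smul_eq_mul]; ring
    have hFi := hFbound _ γmem i j hij
    have hFj := hFbound _ γmem j i (Ne.symm hij)
    have hfi := hfbound _ γmem i j hij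
    have hfj := hfbound _ γmem j i (Ne.symm hij)
    rw [hγi, ← hs] at hFi hfi
    rw [hγj, ← hs'] at hFj hfj
    obtain ⟨hFi1, hFi2⟩ := hFi
    obtain ⟨hFj1, hFj2⟩ := hFj
    obtain ⟨hfi1, hfi2⟩ := hfi
    obtain ⟨hfj1, hfj2⟩ := hfj
    refine ⟨f (α' i + θ * (α i - α' i) + s) * F (α' j + θ * (α j - α' j) + s'),
      F (α' i + θ * (α i - α' i) + s) * f (α' j + θ * (α j - α' j) + s'),
      fun _ => ⟨⟨?_, ?_⟩, ⟨?_, ?_⟩, ?_⟩⟩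
    · nlinarith
    · nlinarith
    · nlinarith
    · nlinarith
    · linear_combination -heq
  choose u v hpair using pair
  refine ⟨fun i j => if i < j then u i j else v j i, ?_, ?_⟩
  · intro i j hij
    by_cases h : i < j
    · simp only [if_pos h]
      exact (hpair i j hij).1
    · simp only [if_neg h]
      exact (hpair j i (Ne.symm hij)).2.1
  · intro i
    have hterm : ∀ j ∈ univ.erase i,
        F (α i + ∑ k, x i j k * β k) * F (α j + ∑ k, x j i k * β k)
          - F (α' i + ∑ k, x i j k * β k) * F (α' j + ∑ k, x j i k * β k)
        = (if i < j then u i j else v j i) * (α i - α' i)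
          + (if j < i then u j i else v i j) * (α j - α' j) := by
      intro j hj
      have hij : i ≠ j := (Finset.ne_of_mem_erase hj).symm
      rcases lt_or_gt_of_ne hij with h | h
      · rw [if_pos h, if_neg (not_lt_of_gt h)]
        exact (hpair i j hij).2.2
      · rw [if_neg (not_lt_of_gt h), if_pos h]
        linear_combination (hpair j i (Ne.symm hij)).2.2
    have hsum : (∑ j ∈ univ.erase i,
          F (α i + ∑ k, x i j k * β k) * F (α j + ∑ k, x j i k * β k))
        - (∑ j ∈ univ.erase i,
          F (α' i + ∑ k, x i j k * β k) * F (α' j + ∑ k, x j i k * β k))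
        = ∑ j ∈ univ.erase i,
          ((if i < j then u i j else v j i) * (α i - α' i)
            + (if j < i then u j i else v i j) * (α j - α' j)) := by
      rw [← Finset.sum_sub_distrib]
      exact Finset.sum_congr rfl hterm
    rw [hr α i, hr α' i]
    simp only []
    linear_combination (-(1 / ((n:ℝ) - 1))) * hsum

end StepA

section Master
variable {n K : ℕ}

lemma two_step
    (hn : 2 ≤ n)
    (c₁ c₂ : ℝ) (hc₁ : c₁ ∈ Set.Ioc (0 : ℝ) (1 / 2)) (hc₂ : c₂ ∈ Set.Ioc (0 : ℝ) (1 / 2))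
    (F f : ℝ → ℝ) (hFf : ∀ t : ℝ, HasDerivAt F (f t) t)
    (β : Fin K → ℝ) (x : Fin n → Fin n → Fin K → ℝ) (d : Fin n → ℝ)
    (D : Set (Fin n → ℝ)) (hDconv : Convex ℝ D)
    (hFbound : ∀ α ∈ D, ∀ i j : Fin n, i ≠ j →
      F (α i + ∑ k, x i j k * β k) ∈ Set.Icc c₁ (1 - c₁))
    (hfbound : ∀ α ∈ D, ∀ i j : Fin n, i ≠ j →
      f (α i + ∑ k, x i j k * β k) ∈ Set.Icc c₂ (1 - c₂))
    (r : (Fin n → ℝ) → Fin n → ℝ)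
    (hr : ∀ α : Fin n → ℝ, ∀ i : Fin n,
      r α i = α i + (1 / ((n : ℝ) - 1)) *
        (d i - ∑ j ∈ univ.erase i,
          F (α i + ∑ k, x i j k * β k) * F (α j + ∑ k, x j i k * β k)))
    (α α' : Fin n → ℝ) (hα : α ∈ D) (hα' : α' ∈ D)
    (hrα : r α ∈ D) (hrα' : r α' ∈ D) :
    ∑ i, |r (r α) i - r (r α') i| ≤
      (1 - 2 * ((n : ℝ) - 2) / ((n : ℝ) - 1) * (c₁ * c₂) ^ 2) *
        ∑ i, |α i - α' i| := by
  have hδ : 0 < c₁ * c₂ := mul_pos hc₁.1 hc₂.1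
  obtain ⟨a, ha, hid⟩ := stepA c₁ c₂ hc₁ hc₂ F f hFf β x d D hDconv hFbound hfbound r hr
    α α' hα hα'
  obtain ⟨a', ha', hid'⟩ := stepA c₁ c₂ hc₁ hc₂ F f hFf β x d D hDconv hFbound hfbound r hr
    (r α) (r α') hrα hrα'
  exact core_contract hn hδ a a' ha ha'
    (fun i => α i - α' i) (fun i => r α i - r α' i) (fun i => r (r α) i - r (r α') i)
    (fun i => hid i) (fun i => hid' i)

end Master

/-- Geometric decay of the fixed-point iterates of the
degree-matching iteration map (Theorem 3.1). -/
theorem fixed_point_iterates_geometric_decay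
    (n K : ℕ) (hn : 2 ≤ n) (hK : 1 ≤ K)
    (c₁ c₂ : ℝ) (hc₁ : c₁ ∈ Set.Ioc (0 : ℝ) (1 / 2)) (hc₂ : c₂ ∈ Set.Ioc (0 : ℝ) (1 / 2))
    (F f : ℝ → ℝ) (hFf : ∀ t : ℝ, HasDerivAt F (f t) t)
    (β : Fin K → ℝ) (x : Fin n → Fin n → Fin K → ℝ) (d : Fin n → ℝ)
    (D : Set (Fin n → ℝ)) (hDne : D.Nonempty) (hDconv : Convex ℝ D)
    (hFbound : ∀ α ∈ D, ∀ i j : Fin n, i ≠ j →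
      F (α i + ∑ k, x i j k * β k) ∈ Set.Icc c₁ (1 - c₁))
    (hfbound : ∀ α ∈ D, ∀ i j : Fin n, i ≠ j →
      f (α i + ∑ k, x i j k * β k) ∈ Set.Icc c₂ (1 - c₂))
    (r : (Fin n → ℝ) → Fin n → ℝ)
    (hr : ∀ α : Fin n → ℝ, ∀ i : Fin n,
      r α i = α i + (1 / ((n : ℝ) - 1)) *
        (d i - ∑ j ∈ univ.erase i,
          F (α i + ∑ k, x i j k * β k) * F (α j + ∑ k, x j i k * β k)))
    (αhat : Fin n → ℝ) (hαhatD : αhat ∈ D) (hfix : r αhat = αhat)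
    (αseq : ℕ → Fin n → ℝ) (hseq0 : αseq 0 ∈ D)
    (hseq : ∀ k : ℕ, αseq (k + 1) = r (αseq k))
    (hseqD : ∀ k : ℕ, αseq k ∈ D) :
    (∀ k : ℕ,
      ∑ i, |αseq (k + 2) i - αhat i| ≤
        (1 - (2 * ((n : ℝ) - 2) / ((n : ℝ) - 1)) * (c₁ * c₂) ^ 2) *
          ∑ i, |αseq k i - αhat i|) ∧
    (∀ k : ℕ, 1 ≤ k →
      ∑ i, |αseq (k + 2) i - αseq (k + 1) i| ≤
        (1 - (2 * ((n : ℝ) - 2) / ((n : ℝ) - 1)) * (c₁ * c₂) ^ 2) *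
          ∑ i, |αseq k i - αseq (k - 1) i|) := by
  constructor
  · intro k
    have h := two_step hn c₁ c₂ hc₁ hc₂ F f hFf β x d D hDconv hFbound hfbound r hr
      (αseq k) αhat (hseqD k) hαhatD
      (by rw [← hseq k]; exact hseqD (k+1)) (by rw [hfix]; exact hαhatD)
    rw [hfix, hfix, ← hseq k, ← hseq (k+1)] at h
    exact h
  · intro k hk
    have hk' : k - 1 + 1 = k := by omega
    have e1 : r (αseq (k-1)) = αseq k := by rw [← hseq (k-1), hk']
    have h := two_step hn c₁ c₂ hc₁ hc₂ F f hFf β x d D hDconv hFbound hfbound r hr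
      (αseq k) (αseq (k-1)) (hseqD k) (hseqD (k-1))
      (by rw [← hseq k]; exact hseqD (k+1)) (by rw [e1]; exact hseqD k)
    rw [e1, ← hseq k, ← hseq (k+1)] at h
    exact h
end

section
/- Under the dyadic fixed-effects setup with n ≥ 3, there is at most one α ∈ D satisfying Σ_{j≠i} p_{ij}(α) = d_i for every i = 1, …, n; equivalently, the map r has at most one fixed point in D. (Uniqueness of the solution to the degree moment equations; uniqueness part of Theorem 3.1.) -/
/-!
Subtracting the two systems of equations and applying the mean value theorem on the segment
`[α', α] ⊆ D` linearizes them: with `v = α - α'`, each equation reads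
`∑_{j ≠ i} (A i j * v i + A j i * v j) = 0` for some positive weights `A`. Summing all equations
gives `∑ R i * v i = 0` with `R i = ∑_{j ≠ i} A i j > 0`, so a nonzero `v` has entries of both
signs. On the other hand, comparing `∑ R i * |v i| = ∑_i |∑_{j ≠ i} A j i * v j|` with the triangle
inequality forces the entries `v j`, `j ≠ i`, to have a common sign for every `i`. With three
indices this is impossible: take `i` different from a positive and a negative entry.
-/

open Finset

theorem Finset.abs_sum_lt_sum_abs {ι : Type*} {s : Finset ι} {a : ι → ℝ} {p q : ι}
    (hp : p ∈ s) (hq : q ∈ s) (hap : 0 < a p) (haq : a q < 0) :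
    |∑ i ∈ s, a i| < ∑ i ∈ s, |a i| := by
  refine abs_lt.2 ⟨?_, ?_⟩
  · rw [← sum_neg_distrib]
    exact sum_lt_sum (fun i _ => neg_abs_le (a i)) ⟨p, hp, by rw [abs_of_pos hap]; linarith⟩
  · exact sum_lt_sum (fun i _ => le_abs_self (a i)) ⟨q, hq, by rw [abs_of_neg haq]; linarith⟩

section OffDiagonal

variable {ι : Type*} [Fintype ι] [DecidableEq ι]

theorem Finset.sum_sum_erase_comm {M : Type*} [AddCommMonoid M] (g : ι → ι → M) :
    ∑ i, ∑ j ∈ univ.erase i, g i j = ∑ i, ∑ j ∈ univ.erase i, g j i :=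
  sum_comm' fun i j => by simp only [mem_univ, mem_erase, ne_comm, and_true, true_and]

variable {A : ι → ι → ℝ} {v : ι → ℝ}

theorem sum_sum_erase_mul_eq_zero (hv : ∀ i, ∑ j ∈ univ.erase i, (A i j * v i + A j i * v j) = 0) :
    ∑ i, (∑ j ∈ univ.erase i, A i j) * v i = 0 := by
  have h := sum_eq_zero (s := univ) fun i _ => hv i
  simp only [sum_add_distrib, ← sum_sum_erase_comm fun i j => A i j * v i] at h
  simpa only [sum_mul] using
    (mul_eq_zero.1 (by linear_combination h : (2 : ℝ) * _ = 0)).resolve_left two_ne_zero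

theorem abs_sum_erase_eq_sum_abs (hA : ∀ i j, i ≠ j → 0 ≤ A i j)
    (hv : ∀ i, ∑ j ∈ univ.erase i, (A i j * v i + A j i * v j) = 0) (i : ι) :
    |∑ j ∈ univ.erase i, A j i * v j| = ∑ j ∈ univ.erase i, |A j i * v j| := by
  have hrow : ∀ i, |∑ j ∈ univ.erase i, A j i * v j| = ∑ j ∈ univ.erase i, |A i j * v i| :=
    fun i => by
      rw [← abs_neg, ← eq_neg_of_add_eq_zero_left ((sum_add_distrib).symm.trans (hv i)),
        ← sum_mul, abs_mul, abs_of_nonneg (sum_nonneg fun j hj => hA i j (ne_of_mem_erase hj).symm),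
        sum_mul]
      exact sum_congr rfl fun j hj => by
        rw [abs_mul, abs_of_nonneg (hA i j (ne_of_mem_erase hj).symm)]
  -- Summed over `i`, the triangle inequalities become an equality, so each one is an equality.
  have hsum : ∑ i, |∑ j ∈ univ.erase i, A j i * v j| = ∑ i, ∑ j ∈ univ.erase i, |A j i * v j| := by
    rw [sum_congr rfl fun i _ => hrow i, sum_sum_erase_comm]
  exact (sum_eq_sum_iff_of_le fun i _ => abs_sum_le_sum_abs _ _).1 hsum i (mem_univ i)

theorem eq_zero_of_forall_sum_erase_eq_zero (hcard : 3 ≤ Fintype.card ι)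
    (hA : ∀ i j, i ≠ j → 0 < A i j)
    (hv : ∀ i, ∑ j ∈ univ.erase i, (A i j * v i + A j i * v j) = 0) : v = 0 := by
  set R : ι → ℝ := fun i => ∑ j ∈ univ.erase i, A i j
  have hR : ∀ i, 0 < R i := fun i =>
    sum_pos (fun j hj => hA i j (ne_of_mem_erase hj).symm) <| by
      rw [← card_pos, card_erase_of_mem (mem_univ i), card_univ]; omega
  have htotal : ∑ i, R i * v i = 0 := sum_sum_erase_mul_eq_zero hv
  by_contra hv0
  obtain ⟨i₀, hi₀⟩ : ∃ i, R i * v i ≠ 0 := by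
    obtain ⟨i, hi⟩ := Function.ne_iff.1 hv0
    exact ⟨i, mul_ne_zero (hR i).ne' hi⟩
  obtain ⟨p, -, hp⟩ := exists_pos_of_sum_zero_of_exists_nonzero _ htotal ⟨i₀, mem_univ _, hi₀⟩
  obtain ⟨q, -, hq⟩ := exists_pos_of_sum_zero_of_exists_nonzero (fun i => -(R i * v i))
    (by rw [sum_neg_distrib, htotal, neg_zero]) ⟨i₀, mem_univ _, neg_ne_zero.2 hi₀⟩
  obtain ⟨k, -, hk⟩ := exists_mem_notMem_of_card_lt_card (s := {p, q}) (t := univ)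
    (card_le_two.trans_lt (by rw [card_univ]; omega))
  simp only [mem_insert, mem_singleton, not_or] at hk
  refine (abs_sum_lt_sum_abs (a := fun j => A j k * v j)
    (mem_erase.2 ⟨hk.1 ∘ Eq.symm, mem_univ p⟩) (mem_erase.2 ⟨hk.2 ∘ Eq.symm, mem_univ q⟩) ?_ ?_).ne
    (abs_sum_erase_eq_sum_abs (fun i j hij => (hA i j hij).le) hv k)
  · exact mul_pos (hA p k (Ne.symm hk.1)) (pos_of_mul_pos_right hp (hR p).le)
  · exact mul_neg_of_pos_of_neg (hA q k (Ne.symm hk.2))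
      (neg_of_mul_neg_right (neg_pos.1 hq) (hR q).le)

end OffDiagonal

theorem exists_mem_Icc_sub_eq_mul_sub {F f : ℝ → ℝ} (hF : ∀ t, HasDerivAt F (f t) t) (a b : ℝ) :
    ∃ t ∈ Set.Icc (0 : ℝ) 1, F b - F a = f (a + t * (b - a)) * (b - a) := by
  have hline : ∀ t, HasDerivAt (fun s => F (a + s * (b - a))) (f (a + t * (b - a)) * (b - a)) t :=
    fun t => (hF _).comp t (((hasDerivAt_id t).mul_const (b - a)).const_add a |>.congr_deriv
      (one_mul _))
  obtain ⟨t, ht, hslope⟩ := exists_hasDerivAt_eq_slope _ _ one_pos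
    (continuous_iff_continuousAt.2 fun t => (hline t).continuousAt).continuousOn
    fun t _ => hline t
  refine ⟨t, Set.Ioo_subset_Icc_self ht, ?_⟩
  simpa using hslope.symm

section DyadicModel

variable {ι : Type*} {F f : ℝ → ℝ} {D : Set (ι → ℝ)} {θ : ι → ι → ℝ} {α α' : ι → ℝ}

theorem exists_pos_sub_eq_mul_sub (hF : ∀ t, HasDerivAt F (f t) t) (hD : Convex ℝ D)
    (hf : ∀ γ ∈ D, ∀ i j, i ≠ j → 0 < f (γ i + θ i j)) (hα : α ∈ D) (hα' : α' ∈ D)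
    {i j : ι} (hij : i ≠ j) :
    ∃ e, 0 < e ∧ F (α i + θ i j) - F (α' i + θ i j) = e * (α i - α' i) := by
  obtain ⟨t, ht, hmvt⟩ := exists_mem_Icc_sub_eq_mul_sub hF (α' i + θ i j) (α i + θ i j)
  have hpoint : (α' + t • (α - α')) i + θ i j
      = α' i + θ i j + t * (α i + θ i j - (α' i + θ i j)) := by
    simp only [Pi.add_apply, Pi.smul_apply, Pi.sub_apply, smul_eq_mul]
    ring
  refine ⟨_, hpoint ▸ hf _ (hD.add_smul_sub_mem hα' hα ht) i j hij, ?_⟩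
  rw [hmvt]
  ring

theorem exists_pos_mul_sub_mul_eq (hF : ∀ t, HasDerivAt F (f t) t) (hD : Convex ℝ D)
    (hFpos : ∀ γ ∈ D, ∀ i j, i ≠ j → 0 < F (γ i + θ i j))
    (hf : ∀ γ ∈ D, ∀ i j, i ≠ j → 0 < f (γ i + θ i j)) (hα : α ∈ D) (hα' : α' ∈ D) :
    ∃ A : ι → ι → ℝ, (∀ i j, i ≠ j → 0 < A i j) ∧ ∀ i j, i ≠ j →
      F (α i + θ i j) * F (α j + θ j i) - F (α' i + θ i j) * F (α' j + θ j i)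
        = A i j * (α i - α' i) + A j i * (α j - α' j) := by
  choose! e he using fun i j (hij : i ≠ j) => exists_pos_sub_eq_mul_sub hF hD hf hα hα' hij
  -- `a b - a' b' = (a - a') (b + b') / 2 + (b - b') (a + a') / 2`
  refine ⟨fun i j => (F (α j + θ j i) + F (α' j + θ j i)) / 2 * e i j, fun i j hij => ?_,
    fun i j hij => ?_⟩
  · have := hFpos α hα j i hij.symm
    have := hFpos α' hα' j i hij.symm
    exact mul_pos (by positivity) (he i j hij).1
  · linear_combination (F (α j + θ j i) + F (α' j + θ j i)) / 2 * (he i j hij).2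
      + (F (α i + θ i j) + F (α' i + θ i j)) / 2 * (he j i hij.symm).2

end DyadicModel

theorem degree_moment_equations_unique_root_general
    (n K : ℕ) (hn : 3 ≤ n)
    (c₁ c₂ : ℝ) (hc₁ : c₁ ∈ Set.Ioc (0 : ℝ) (1 / 2)) (hc₂ : c₂ ∈ Set.Ioc (0 : ℝ) (1 / 2))
    (F f : ℝ → ℝ) (hFf : ∀ t : ℝ, HasDerivAt F (f t) t)
    (β : Fin K → ℝ) (x : Fin n → Fin n → Fin K → ℝ) (d : Fin n → ℝ)
    (D : Set (Fin n → ℝ)) (hDconv : Convex ℝ D)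
    (hFbound : ∀ α ∈ D, ∀ i j : Fin n, i ≠ j →
      F (α i + ∑ k, x i j k * β k) ∈ Set.Icc c₁ (1 - c₁))
    (hfbound : ∀ α ∈ D, ∀ i j : Fin n, i ≠ j →
      f (α i + ∑ k, x i j k * β k) ∈ Set.Icc c₂ (1 - c₂))
    (α α' : Fin n → ℝ) (hα : α ∈ D) (hα' : α' ∈ D)
    (hroot : ∀ i : Fin n,
      ∑ j ∈ univ.erase i,
        F (α i + ∑ k, x i j k * β k) * F (α j + ∑ k, x j i k * β k) = d i)
    (hroot' : ∀ i : Fin n,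
      ∑ j ∈ univ.erase i,
        F (α' i + ∑ k, x i j k * β k) * F (α' j + ∑ k, x j i k * β k) = d i) :
    α = α' := by
  obtain ⟨A, hA, hdiff⟩ := exists_pos_mul_sub_mul_eq (θ := fun i j => ∑ k, x i j k * β k) hFf hDconv
    (fun γ hγ i j hij => hc₁.1.trans_le (hFbound γ hγ i j hij).1)
    (fun γ hγ i j hij => hc₂.1.trans_le (hfbound γ hγ i j hij).1) hα hα'
  refine sub_eq_zero.1 <| eq_zero_of_forall_sum_erase_eq_zero (by simpa using hn) hA fun i => ?_
  calc ∑ j ∈ univ.erase i, (A i j * (α - α') i + A j i * (α - α') j)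
      = ∑ j ∈ univ.erase i, (F (α i + ∑ k, x i j k * β k) * F (α j + ∑ k, x j i k * β k)
          - F (α' i + ∑ k, x i j k * β k) * F (α' j + ∑ k, x j i k * β k)) :=
        sum_congr rfl fun j hj => (hdiff i j (ne_of_mem_erase hj).symm).symm
    _ = 0 := by rw [sum_sub_distrib, hroot i, hroot' i, sub_self]

/-- Uniqueness of the solution to the degree moment equations
(uniqueness part of Theorem 3.1). -/
theorem degree_moment_equations_unique_root
    (n K : ℕ) (hn : 3 ≤ n) (hK : 1 ≤ K)
    (c₁ c₂ : ℝ) (hc₁ : c₁ ∈ Set.Ioc (0 : ℝ) (1 / 2)) (hc₂ : c₂ ∈ Set.Ioc (0 : ℝ) (1 / 2))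
    (F f : ℝ → ℝ) (hFf : ∀ t : ℝ, HasDerivAt F (f t) t)
    (β : Fin K → ℝ) (x : Fin n → Fin n → Fin K → ℝ) (d : Fin n → ℝ)
    (D : Set (Fin n → ℝ)) (hDne : D.Nonempty) (hDconv : Convex ℝ D)
    (hFbound : ∀ α ∈ D, ∀ i j : Fin n, i ≠ j →
      F (α i + ∑ k, x i j k * β k) ∈ Set.Icc c₁ (1 - c₁))
    (hfbound : ∀ α ∈ D, ∀ i j : Fin n, i ≠ j →
      f (α i + ∑ k, x i j k * β k) ∈ Set.Icc c₂ (1 - c₂))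
    (α α' : Fin n → ℝ) (hα : α ∈ D) (hα' : α' ∈ D)
    (hroot : ∀ i : Fin n,
      ∑ j ∈ univ.erase i,
        F (α i + ∑ k, x i j k * β k) * F (α j + ∑ k, x j i k * β k) = d i)
    (hroot' : ∀ i : Fin n,
      ∑ j ∈ univ.erase i,
        F (α' i + ∑ k, x i j k * β k) * F (α' j + ∑ k, x j i k * β k) = d i) :
    α = α' :=
  degree_moment_equations_unique_root_general n K hn c₁ c₂ hc₁ hc₂ F f hFf β x d D hDconv hFbound
    hfbound α α' hα hα' hroot hroot'
end

section
/- Under the dyadic fixed-effects setup, for every α ∈ D: (i) for all i ≠ j, the partial derivative ∂r_j/∂α_i at α equals −F_{ji}(α)·f_{ij}(α)/(n−1) and satisfies −(1−c₁)(1−c₂)/(n−1) ≤ ∂r_j/∂α_i(α) ≤ −c₁c₂/(n−1); (ii) for every i, ∂r_i/∂α_i(α) = 1 − (1/(n−1))·Σ_{j≠i} f_{ij}(α)·F_{ji}(α) and c₁ + c₂ − c₁c₂ ≤ ∂r_i/∂α_i(α) ≤ 1 − c₁c₂; (iii) for every i, Σ_{j=1}^{n} |∂r_j/∂α_i(α)|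 = 1. -/
/-!
Moving `α_i` alone changes only the link probabilities that involve `i`: for `j ≠ i` the single
term `p_{ji}` of `r_j`, with derivative `F_{ji} f_{ij}`, and every term of `r_i`, with
derivatives `f_{ij} F_{ji}`. So column `i` of the Jacobian consists of the numbers
`w_j = F_{ji} f_{ij} ∈ [c₁c₂, (1-c₁)(1-c₂)]` scaled by `-1/(n-1)` off the diagonal, and of
`1 - mean_j w_j` on the diagonal. The mean lies in the same interval, in particular below `1`,
so the diagonal entry is nonnegative and the absolute column sum is
`(1 - mean w) + mean w = 1`.
-/

open Finset Function

theorem mul_mem_Icc_mul {R : Type*} [Mul R] [Zero R] [Preorder R] [PosMulMono R] [MulPosMono R]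
    {a b p q p' q' : R} (ha : a ∈ Set.Icc p q) (hb : b ∈ Set.Icc p' q') (hp : 0 ≤ p)
    (hp' : 0 ≤ p') :
    a * b ∈ Set.Icc (p * p') (q * q') :=
  ⟨mul_le_mul ha.1 hb.1 hp' (hp.trans ha.1),
    mul_le_mul ha.2 hb.2 (hp'.trans hb.1) (hp.trans (ha.1.trans ha.2))⟩

theorem one_div_card_mul_sum_mem_Icc {ι K : Type*} [Field K] [LinearOrder K]
    [IsStrictOrderedRing K] {s : Finset ι} (hs : s.Nonempty) {w : ι → K} {m M : K}
    (hw : ∀ l ∈ s, w l ∈ Set.Icc m M) :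
    1 / (#s : K) * ∑ l ∈ s, w l ∈ Set.Icc m M := by
  have hcard : (0 : K) < #s := by exact_mod_cast hs.card_pos
  rw [one_div_mul_eq_div, Set.mem_Icc, le_div_iff₀ hcard, div_le_iff₀ hcard, mul_comm m,
    mul_comm M]
  exact ⟨by simpa using card_nsmul_le_sum s w m fun l hl => (hw l hl).1,
    by simpa using sum_le_card_nsmul s w M fun l hl => (hw l hl).2⟩

theorem abs_one_sub_mean_add_sum_abs_neg_div {ι K : Type*} [Field K] [LinearOrder K]
    [IsStrictOrderedRing K] {s : Finset ι} {w : ι → K} {m : K} (hm : 0 < m) (hw : ∀ l ∈ s, 0 ≤ w l)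
    (hmean : 1 / m * ∑ l ∈ s, w l ≤ 1) :
    |1 - 1 / m * ∑ l ∈ s, w l| + ∑ l ∈ s, |-w l / m| = 1 := by
  have habs : ∑ l ∈ s, |-w l / m| = 1 / m * ∑ l ∈ s, w l := by
    rw [mul_sum]
    refine sum_congr rfl fun l hl => ?_
    rw [abs_div, abs_neg, abs_of_nonneg (hw l hl), abs_of_pos hm, one_div_mul_eq_div]
  rw [habs, abs_of_nonneg (sub_nonneg.mpr hmean), sub_add_cancel]

theorem hasDerivAt_comp_update_apply_add {ι : Type*} [DecidableEq ι] {F f : ℝ → ℝ}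
    (hFf : ∀ t, HasDerivAt F (f t) t) (α : ι → ℝ) (i l : ι) (c : ℝ) :
    HasDerivAt (fun t => F (update α i t l + c)) (f (α l + c) * (Pi.single i 1 : ι → ℝ) l)
      (α i) := by
  have h := (hFf _).comp (α i) ((hasDerivAt_pi.mp (hasDerivAt_update α i (α i)) l).add_const c)
  rwa [update_eq_self] at h

section
variable {ι : Type*} [Fintype ι] [DecidableEq ι]

noncomputable def expectedDegree (F : ℝ → ℝ) (X : ι → ι → ℝ) (α : ι → ℝ) (j : ι) : ℝ :=
  ∑ l ∈ univ.erase j, F (α j + X j l) * F (α l + X l j)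

/-- The paper's `r`, with `X i j` standing for `x_{ij}ᵀβ` and `c` for `1/(n-1)`. -/
noncomputable def iterationMap (F : ℝ → ℝ) (X : ι → ι → ℝ) (d : ι → ℝ) (c : ℝ) (α : ι → ℝ)
    (j : ι) : ℝ :=
  α j + c * (d j - expectedDegree F X α j)

variable {F f : ℝ → ℝ}

theorem hasDerivAt_expectedDegree_update
    (hFf : ∀ t, HasDerivAt F (f t) t) (X : ι → ι → ℝ) (α : ι → ℝ) (i j : ι) :
    HasDerivAt (fun t => expectedDegree F X (update α i t) j)
      (∑ l ∈ univ.erase j, (f (α j + X j l) * (Pi.single i 1 : ι → ℝ) j * F (α l + X l j) +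
        F (α j + X j l) * (f (α l + X l j) * (Pi.single i 1 : ι → ℝ) l))) (α i) := by
  refine HasDerivAt.fun_sum fun l _ => ?_
  simpa only [update_eq_self] using
    (hasDerivAt_comp_update_apply_add hFf α i j (X j l)).fun_mul
      (hasDerivAt_comp_update_apply_add hFf α i l (X l j))

theorem hasDerivAt_expectedDegree_update_of_ne
    (hFf : ∀ t, HasDerivAt F (f t) t) (X : ι → ι → ℝ) (α : ι → ℝ) {i j : ι} (hij : i ≠ j) :
    HasDerivAt (fun t => expectedDegree F X (update α i t) j)
      (F (α j + X j i) * f (α i + X i j)) (α i) := by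
  convert hasDerivAt_expectedDegree_update hFf X α i j using 1
  simp [Pi.single_apply, hij, hij.symm]

theorem hasDerivAt_expectedDegree_update_self
    (hFf : ∀ t, HasDerivAt F (f t) t) (X : ι → ι → ℝ) (α : ι → ℝ) (i : ι) :
    HasDerivAt (fun t => expectedDegree F X (update α i t) i)
      (∑ l ∈ univ.erase i, f (α i + X i l) * F (α l + X l i)) (α i) := by
  convert hasDerivAt_expectedDegree_update hFf X α i i using 1
  refine sum_congr rfl fun l hl => ?_
  simp [ne_of_mem_erase hl]

theorem hasDerivAt_iterationMap_update_of_ne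
    (hFf : ∀ t, HasDerivAt F (f t) t) (X : ι → ι → ℝ) (α : ι → ℝ) (d : ι → ℝ) (c : ℝ)
    {i j : ι} (hij : i ≠ j) :
    HasDerivAt (fun t => iterationMap F X d c (update α i t) j)
      (-(c * (F (α j + X j i) * f (α i + X i j)))) (α i) := by
  have h := ((hasDerivAt_expectedDegree_update_of_ne hFf X α hij).const_sub (d j)).const_mul c
  simp only [iterationMap, update_of_ne hij.symm]
  exact (h.const_add (α j)).congr_deriv (by ring)

theorem hasDerivAt_iterationMap_update_self
    (hFf : ∀ t, HasDerivAt F (f t) t) (X : ι → ι → ℝ) (α : ι → ℝ) (d : ι → ℝ) (c : ℝ)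
    (i : ι) :
    HasDerivAt (fun t => iterationMap F X d c (update α i t) i)
      (1 - c * ∑ l ∈ univ.erase i, f (α i + X i l) * F (α l + X l i)) (α i) := by
  have h := ((hasDerivAt_expectedDegree_update_self hFf X α i).const_sub (d i)).const_mul c
  simp only [iterationMap, update_self]
  exact ((hasDerivAt_id' (α i)).add h).congr_deriv (by ring)

end

theorem iteration_map_partial_derivatives_general
    (n K : ℕ) (hn : 2 ≤ n)
    (c₁ c₂ : ℝ) (hc₁ : c₁ ∈ Set.Ioc (0 : ℝ) (1 / 2)) (hc₂ : c₂ ∈ Set.Ioc (0 : ℝ) (1 / 2))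
    (F f : ℝ → ℝ) (hFf : ∀ t : ℝ, HasDerivAt F (f t) t)
    (β : Fin K → ℝ) (x : Fin n → Fin n → Fin K → ℝ) (d : Fin n → ℝ)
    (D : Set (Fin n → ℝ))
    (hFbound : ∀ α ∈ D, ∀ i j : Fin n, i ≠ j →
      F (α i + ∑ k, x i j k * β k) ∈ Set.Icc c₁ (1 - c₁))
    (hfbound : ∀ α ∈ D, ∀ i j : Fin n, i ≠ j →
      f (α i + ∑ k, x i j k * β k) ∈ Set.Icc c₂ (1 - c₂))
    (r : (Fin n → ℝ) → Fin n → ℝ)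
    (hr : ∀ α : Fin n → ℝ, ∀ i : Fin n,
      r α i = α i + (1 / ((n : ℝ) - 1)) *
        (d i - ∑ j ∈ univ.erase i,
          F (α i + ∑ k, x i j k * β k) * F (α j + ∑ k, x j i k * β k)))
    (α : Fin n → ℝ) (hα : α ∈ D) :
    -- (i) off-diagonal partial derivatives: formula and bounds
    (∀ i j : Fin n, i ≠ j →
      HasDerivAt (fun t : ℝ => r (Function.update α i t) j)
        (-(F (α j + ∑ k, x j i k * β k) * f (α i + ∑ k, x i j k * β k)) / ((n : ℝ) - 1))
        (α i) ∧
      -((1 - c₁) * (1 - c₂)) / ((n : ℝ) - 1) ≤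
        -(F (α j + ∑ k, x j i k * β k) * f (α i + ∑ k, x i j k * β k)) / ((n : ℝ) - 1) ∧
      -(F (α j + ∑ k, x j i k * β k) * f (α i + ∑ k, x i j k * β k)) / ((n : ℝ) - 1) ≤
        -(c₁ * c₂) / ((n : ℝ) - 1)) ∧
    -- (ii) diagonal partial derivatives: formula and bounds
    (∀ i : Fin n,
      HasDerivAt (fun t : ℝ => r (Function.update α i t) i)
        (1 - (1 / ((n : ℝ) - 1)) *
          ∑ j ∈ univ.erase i,
            f (α i + ∑ k, x i j k * β k) * F (α j + ∑ k, x j i k * β k))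
        (α i) ∧
      c₁ + c₂ - c₁ * c₂ ≤
        1 - (1 / ((n : ℝ) - 1)) *
          ∑ j ∈ univ.erase i,
            f (α i + ∑ k, x i j k * β k) * F (α j + ∑ k, x j i k * β k) ∧
      1 - (1 / ((n : ℝ) - 1)) *
          ∑ j ∈ univ.erase i,
            f (α i + ∑ k, x i j k * β k) * F (α j + ∑ k, x j i k * β k) ≤
        1 - c₁ * c₂) ∧
    -- (iii) the absolute values of the partial derivatives in each column sum to one
    (∀ i : Fin n,
      |1 - (1 / ((n : ℝ) - 1)) *
          ∑ j ∈ univ.erase i,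
            f (α i + ∑ k, x i j k * β k) * F (α j + ∑ k, x j i k * β k)| +
        ∑ j ∈ univ.erase i,
          |(-(F (α j + ∑ k, x j i k * β k) * f (α i + ∑ k, x i j k * β k))) / ((n : ℝ) - 1)|
      = 1) := by
  set X : Fin n → Fin n → ℝ := fun i j => ∑ k, x i j k * β k
  obtain rfl : r = iterationMap F X d (1 / ((n : ℝ) - 1)) := funext fun α => funext (hr α)
  have hm : (0 : ℝ) < n - 1 := by
    have : (2 : ℝ) ≤ n := by exact_mod_cast hn
    linarith
  have hprod : ∀ i j, i ≠ j →
      F (α j + X j i) * f (α i + X i j) ∈ Set.Icc (c₁ * c₂) ((1 - c₁) * (1 - c₂)) :=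
    fun i j hij => mul_mem_Icc_mul (hFbound α hα j i hij.symm) (hfbound α hα i j hij)
      hc₁.1.le hc₂.1.le
  have hterm : ∀ i, ∀ l ∈ univ.erase i,
      f (α i + X i l) * F (α l + X l i) ∈ Set.Icc (c₁ * c₂) ((1 - c₁) * (1 - c₂)) :=
    fun i l hl => mul_comm (F _) (f _) ▸ hprod i l (ne_of_mem_erase hl).symm
  have hmean : ∀ i, 1 / ((n : ℝ) - 1) * ∑ l ∈ univ.erase i, f (α i + X i l) * F (α l + X l i)
      ∈ Set.Icc (c₁ * c₂) ((1 - c₁) * (1 - c₂)) := by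
    intro i
    have hcard : #(univ.erase i) = n - 1 := by
      rw [card_erase_of_mem (mem_univ i), card_univ, Fintype.card_fin]
    rw [← Nat.cast_pred (by omega), ← hcard]
    exact one_div_card_mul_sum_mem_Icc (card_pos.mp (by omega)) (hterm i)
  have hcorner : (1 - c₁) * (1 - c₂) = 1 - (c₁ + c₂ - c₁ * c₂) := by ring
  have hcorner_le_one : (1 - c₁) * (1 - c₂) ≤ 1 :=
    mul_le_one₀ (by linarith [hc₁.1]) (by linarith [hc₂.2]) (by linarith [hc₂.1])
  refine ⟨fun i j hij => ⟨?_, ?_, ?_⟩, fun i => ⟨?_, ?_, ?_⟩, fun i => ?_⟩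
  · exact (hasDerivAt_iterationMap_update_of_ne hFf X α d _ hij).congr_deriv (by ring)
  · exact div_le_div_of_nonneg_right (neg_le_neg (hprod i j hij).2) hm.le
  · exact div_le_div_of_nonneg_right (neg_le_neg (hprod i j hij).1) hm.le
  · exact hasDerivAt_iterationMap_update_self hFf X α d _ i
  · linarith [(hmean i).2]
  · linarith [(hmean i).1]
  · simp_rw [mul_comm (F _) (f _)]
    exact abs_one_sub_mean_add_sum_abs_neg_div hm
      (fun l hl => (mul_pos hc₁.1 hc₂.1).le.trans (hterm i l hl).1) (by linarith [(hmean i).2])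

/-- Formulas and bounds for the partial derivatives of the
degree-matching iteration map `r`, and the unit column absolute-sum identity. -/
theorem iteration_map_partial_derivatives
    (n K : ℕ) (hn : 2 ≤ n) (hK : 1 ≤ K)
    (c₁ c₂ : ℝ) (hc₁ : c₁ ∈ Set.Ioc (0 : ℝ) (1 / 2)) (hc₂ : c₂ ∈ Set.Ioc (0 : ℝ) (1 / 2))
    (F f : ℝ → ℝ) (hFf : ∀ t : ℝ, HasDerivAt F (f t) t)
    (β : Fin K → ℝ) (x : Fin n → Fin n → Fin K → ℝ) (d : Fin n → ℝ)
    (D : Set (Fin n → ℝ)) (hDne : D.Nonempty) (hDconv : Convex ℝ D)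
    (hFbound : ∀ α ∈ D, ∀ i j : Fin n, i ≠ j →
      F (α i + ∑ k, x i j k * β k) ∈ Set.Icc c₁ (1 - c₁))
    (hfbound : ∀ α ∈ D, ∀ i j : Fin n, i ≠ j →
      f (α i + ∑ k, x i j k * β k) ∈ Set.Icc c₂ (1 - c₂))
    (r : (Fin n → ℝ) → Fin n → ℝ)
    (hr : ∀ α : Fin n → ℝ, ∀ i : Fin n,
      r α i = α i + (1 / ((n : ℝ) - 1)) *
        (d i - ∑ j ∈ univ.erase i,
          F (α i + ∑ k, x i j k * β k) * F (α j + ∑ k, x j i k * β k)))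
    (α : Fin n → ℝ) (hα : α ∈ D) :
    -- (i) off-diagonal partial derivatives: formula and bounds
    (∀ i j : Fin n, i ≠ j →
      HasDerivAt (fun t : ℝ => r (Function.update α i t) j)
        (-(F (α j + ∑ k, x j i k * β k) * f (α i + ∑ k, x i j k * β k)) / ((n : ℝ) - 1))
        (α i) ∧
      -((1 - c₁) * (1 - c₂)) / ((n : ℝ) - 1) ≤
        -(F (α j + ∑ k, x j i k * β k) * f (α i + ∑ k, x i j k * β k)) / ((n : ℝ) - 1) ∧
      -(F (α j + ∑ k, x j i k * β k) * f (α i + ∑ k, x i j k * β k)) / ((n : ℝ) - 1) ≤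
        -(c₁ * c₂) / ((n : ℝ) - 1)) ∧
    -- (ii) diagonal partial derivatives: formula and bounds
    (∀ i : Fin n,
      HasDerivAt (fun t : ℝ => r (Function.update α i t) i)
        (1 - (1 / ((n : ℝ) - 1)) *
          ∑ j ∈ univ.erase i,
            f (α i + ∑ k, x i j k * β k) * F (α j + ∑ k, x j i k * β k))
        (α i) ∧
      c₁ + c₂ - c₁ * c₂ ≤
        1 - (1 / ((n : ℝ) - 1)) *
          ∑ j ∈ univ.erase i,
            f (α i + ∑ k, x i j k * β k) * F (α j + ∑ k, x j i k * β k) ∧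
      1 - (1 / ((n : ℝ) - 1)) *
          ∑ j ∈ univ.erase i,
            f (α i + ∑ k, x i j k * β k) * F (α j + ∑ k, x j i k * β k) ≤
        1 - c₁ * c₂) ∧
    -- (iii) the absolute values of the partial derivatives in each column sum to one
    (∀ i : Fin n,
      |1 - (1 / ((n : ℝ) - 1)) *
          ∑ j ∈ univ.erase i,
            f (α i + ∑ k, x i j k * β k) * F (α j + ∑ k, x j i k * β k)| +
        ∑ j ∈ univ.erase i,
          |(-(F (α j + ∑ k, x j i k * β k) * f (α i + ∑ k, x i j k * β k))) / ((n : ℝ) - 1)|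
      = 1) :=
  iteration_map_partial_derivatives_general n K hn c₁ c₂ hc₁ hc₂ F f hFf β x d D hFbound hfbound r
    hr α hα
end

section
/- Let n ≥ 2 be an integer and δ ∈ (0, 1/4]. Let A and B be n×n real matrices each satisfying: every column absolute sum is at most 1 (i.e., ‖A‖₁ ≤ 1 and ‖B‖₁ ≤ 1), every diagonal entry is at least δ, and every off-diagonal entry is at most −δ/(n−1). Then ‖AB‖₁ ≤ 1 − (2(n−2)/(n−1))·δ². (Matrix product contraction lemma underlying Theorem 3.1.) -/
open Finset

/-- Matrix product contraction lemma (Lemma 2.1 style) underlying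
Theorem 3.1: if `A`, `B` have column absolute sums at most 1, diagonal entries
at least `δ`, and off-diagonal entries at most `-δ/(n-1)`, then the maximum
column absolute sum of `A * B` is at most `1 - (2(n-2)/(n-1))·δ²`. -/
theorem matrix_product_l1_contraction
    (n : ℕ) (hn : 2 ≤ n) (δ : ℝ) (hδ : δ ∈ Set.Ioc (0 : ℝ) (1 / 4))
    (A B : Matrix (Fin n) (Fin n) ℝ)
    (hAcol : ∀ j : Fin n, ∑ i, |A i j| ≤ 1)
    (hBcol : ∀ j : Fin n, ∑ i, |B i j| ≤ 1)
    (hAdiag : ∀ i : Fin n, δ ≤ A i i)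
    (hBdiag : ∀ i : Fin n, δ ≤ B i i)
    (hAoff : ∀ i j : Fin n, i ≠ j → A i j ≤ -δ / ((n : ℝ) - 1))
    (hBoff : ∀ i j : Fin n, i ≠ j → B i j ≤ -δ / ((n : ℝ) - 1)) :
    ∀ j : Fin n, ∑ i, |(A * B) i j| ≤ 1 - (2 * ((n : ℝ) - 2) / ((n : ℝ) - 1)) * δ ^ 2 := by
  intro j
  obtain ⟨hδ0, hδ4⟩ := hδ
  have hnR : (2:ℝ) ≤ (n:ℝ) := by exact_mod_cast hn
  have hn1 : (0:ℝ) < (n:ℝ) - 1 := by linarith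
  obtain ⟨c, hc⟩ : ∃ c : ℝ, c = δ / ((n:ℝ) - 1) := ⟨_, rfl⟩
  have hcpos : 0 < c := hc ▸ div_pos hδ0 hn1
  have hδc : 0 < δ * c := mul_pos hδ0 hcpos
  have hcδ : ((n:ℝ) - 1) * c = δ := by rw [hc]; field_simp
  obtain ⟨m, hm⟩ : ∃ m : ℝ, m = ((n:ℝ) - 2) * c ^ 2 := ⟨_, rfl⟩
  have hm0 : 0 ≤ m := hm ▸ mul_nonneg (by linarith) (sq_nonneg c)
  have hfin : ((n:ℝ) - 1) * (2 * m) = 2 * ((n : ℝ) - 2) / ((n : ℝ) - 1) * δ ^ 2 := by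
    rw [hm, hc]
    field_simp
  -- per-row bound for i ≠ j
  have key : ∀ i : Fin n, i ≠ j →
      |(A * B) i j| ≤ (∑ k, |A i k| * |B k j|) - 2 * m := by
    intro i hij
    have hpair : ({i, j} : Finset (Fin n)) ⊆ univ := subset_univ _
    have hcard : (univ \ ({i, j} : Finset (Fin n))).card = n - 2 := by
      rw [card_sdiff_of_subset hpair, card_pair hij, card_univ, Fintype.card_fin]
    obtain ⟨P, hP⟩ : ∃ x : ℝ,
        x = ∑ k ∈ univ \ ({i, j} : Finset (Fin n)), A i k * B k j := ⟨_, rfl⟩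
    obtain ⟨N, hN⟩ : ∃ x : ℝ, x = -(A i i * B i j + A i j * B j j) := ⟨_, rfl⟩
    have hti : A i i * B i j ≤ -(δ * c) := by
      have h1 := hAdiag i
      have h2 : B i j ≤ -c := by
        have := hBoff i j hij
        rwa [hc, ← neg_div]
      nlinarith
    have htj : A i j * B j j ≤ -(δ * c) := by
      have h1 := hBdiag j
      have h2 : A i j ≤ -c := by
        have := hAoff i j hij
        rwa [hc, ← neg_div]
      nlinarith
    have hrest : ∀ k ∈ univ \ ({i, j} : Finset (Fin n)),
        c ^ 2 ≤ A i k * B k j := by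
      intro k hk
      simp only [mem_sdiff, mem_insert, mem_singleton, not_or] at hk
      obtain ⟨-, hki, hkj⟩ := hk
      have h1 : A i k ≤ -c := by
        have := hAoff i k (fun h => hki h.symm)
        rwa [hc, ← neg_div]
      have h2 : B k j ≤ -c := by
        have := hBoff k j hkj
        rwa [hc, ← neg_div]
      nlinarith
    have hPm : m ≤ P := by
      have h := Finset.card_nsmul_le_sum (univ \ ({i, j} : Finset (Fin n)))
        (fun k => A i k * B k j) (c ^ 2) hrest
      rw [hcard, nsmul_eq_mul] at h
      have hcast : ((n - 2 : ℕ) : ℝ) = (n:ℝ) - 2 := by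
        push_cast [Nat.cast_sub hn]; ring
      rw [hcast] at h
      rw [hP, hm]
      exact h
    have hNm : m ≤ N := by
      have h1 : 2 * (δ * c) ≤ N := by rw [hN]; linarith
      have h2 : m ≤ 2 * (δ * c) := by
        rw [hm, ← hcδ]
        nlinarith [sq_nonneg c, hcpos.le]
      linarith
    have hsum : ∑ k, A i k * B k j = P - N := by
      rw [hP, hN, ← Finset.sum_sdiff hpair, Finset.sum_pair hij]; ring
    have habs : |(A * B) i j| ≤ P + N - 2 * m := by
      rw [Matrix.mul_apply, hsum, abs_le]
      constructor <;> linarith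
    have habsum : ∑ k, |A i k| * |B k j| = P + N := by
      have h0 : ∀ k, |A i k| * |B k j| = |A i k * B k j| :=
        fun k => (abs_mul _ _).symm
      rw [Finset.sum_congr rfl fun k _ => h0 k]
      rw [← Finset.sum_sdiff hpair, Finset.sum_pair hij]
      have e1 : |A i i * B i j| = -(A i i * B i j) :=
        abs_of_nonpos (by linarith)
      have e2 : |A i j * B j j| = -(A i j * B j j) :=
        abs_of_nonpos (by linarith)
      have e3 : ∑ k ∈ univ \ ({i, j} : Finset (Fin n)), |A i k * B k j| = P := by
        rw [hP]
        exact Finset.sum_congr rfl fun k hk =>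
          abs_of_nonneg (le_trans (by positivity) (hrest k hk))
      rw [e3, e1, e2, hN]; ring
    rw [habsum]; exact habs
  -- sum over all rows
  have step : ∑ i, |(A * B) i j| ≤
      ∑ i, ((∑ k, |A i k| * |B k j|) - (if i = j then 0 else 2 * m)) := by
    apply Finset.sum_le_sum
    intro i _
    by_cases h : i = j
    · subst h
      rw [if_pos rfl, sub_zero, Matrix.mul_apply]
      calc |∑ k, A i k * B k i| ≤ ∑ k, |A i k * B k i| :=
            Finset.abs_sum_le_sum_abs _ _
        _ = ∑ k, |A i k| * |B k i| :=
            Finset.sum_congr rfl fun k _ => abs_mul _ _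
    · rw [if_neg h]
      exact key i h
  have hite : ∑ i : Fin n, (if i = j then (0:ℝ) else 2 * m)
      = ((n:ℝ) - 1) * (2 * m) := by
    have h1 : ∀ i : Fin n, (if i = j then (0:ℝ) else 2 * m)
        = 2 * m - (if i = j then 2 * m else 0) := by
      intro i; split <;> ring
    rw [Finset.sum_congr rfl fun i _ => h1 i, Finset.sum_sub_distrib,
      Finset.sum_const, Finset.sum_ite_eq' univ j (fun _ => 2 * m)]
    simp only [card_univ, Fintype.card_fin, mem_univ, if_pos, nsmul_eq_mul]
    ring
  have hT : ∑ i : Fin n, ∑ k, |A i k| * |B k j| ≤ 1 := by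
    rw [Finset.sum_comm]
    calc ∑ k : Fin n, ∑ i, |A i k| * |B k j|
        = ∑ k : Fin n, (∑ i, |A i k|) * |B k j| := by
          refine Finset.sum_congr rfl fun k _ => ?_
          rw [← Finset.sum_mul]
      _ ≤ ∑ k : Fin n, 1 * |B k j| :=
          Finset.sum_le_sum fun k _ =>
            mul_le_mul_of_nonneg_right (hAcol k) (abs_nonneg _)
      _ = ∑ k : Fin n, |B k j| :=
          Finset.sum_congr rfl fun k _ => one_mul _
      _ ≤ 1 := hBcol j
  calc ∑ i, |(A * B) i j|
      ≤ ∑ i, ((∑ k, |A i k| * |B k j|) - (if i = j then 0 else 2 * m)) := step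
    _ = (∑ i : Fin n, ∑ k, |A i k| * |B k j|) - ((n:ℝ) - 1) * (2 * m) := by
        rw [Finset.sum_sub_distrib, hite]
    _ ≤ 1 - 2 * ((n : ℝ) - 2) / ((n : ℝ) - 1) * δ ^ 2 := by
        rw [← hfin]; linarith [hT]
end

section
/- For all real numbers 0 < m ≤ M there exist a constant C > 0 and an integer n₀ ≥ 2 such that: for every n ≥ n₀ and every invertible n×n real matrix A = (a_{ij}) with m ≤ a_{ij} ≤ M for all i ≠ j and 0 ≤ a_{ii} − Σ_{j≠i} a_{ji} ≤ M for all i, one has ‖A⁻¹‖_∞ ≤ C/n. (Row-norm bound on the inverse used for the Jacobian of the degree moment equations.) -/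
/-!
If `A u = s`, then `z j = A j j * u j` solves `z + Q z = s`, where `Q` is `A` off the diagonal with
column `j` divided by `A j j`. Column dominance makes the columns of `Q` sum to at most `1`, and the
entry bounds put the off-diagonal entries of `Q` between `a = m / (n M)` and `M / ((n - 1) m)`.
Removing `a` from the off-diagonal entries leaves a matrix of `ℓ¹` operator norm `≤ 1 - a (n - 1)`,
so `‖z‖₁` is controlled by `‖s‖₁` and `a n |∑ z|`; summing the equation controls `2 |∑ z|` by
`‖s‖₁ + ‖z‖₁`. Hence `‖z‖₁ = O(n)` when `‖s‖_∞ ≤ 1`, so `|z k| = O(1)` and `|u k| = O(1 / n)`.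
Choosing for `s` the signs of the `i`-th row of `A⁻¹` turns `u i` into that row's absolute sum.
-/

open Finset Matrix

section AddMulVec

variable {ι : Type*} [Fintype ι]

theorem abs_mulVec_le (R : Matrix ι ι ℝ) (z : ι → ℝ) (k : ι) :
    |(R *ᵥ z) k| ≤ ∑ j, |R k j| * |z j| :=
  (abs_sum_le_sum_abs _ _).trans_eq (by simp only [abs_mul])

theorem sum_abs_mulVec_le_s7 {R : Matrix ι ι ℝ} {c : ℝ} (hR : ∀ j, ∑ k, |R k j| ≤ c) (z : ι → ℝ) :
    ∑ k, |(R *ᵥ z) k| ≤ c * ∑ j, |z j| :=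
  calc ∑ k, |(R *ᵥ z) k| ≤ ∑ k, ∑ j, |R k j| * |z j| := sum_le_sum fun k _ => abs_mulVec_le R z k
    _ = ∑ j, (∑ k, |R k j|) * |z j| := by rw [sum_comm]; simp_rw [sum_mul]
    _ ≤ ∑ j, c * |z j| := by gcongr with j; exact hR j
    _ = c * ∑ j, |z j| := (mul_sum ..).symm

variable {Q : Matrix ι ι ℝ} {z s : ι → ℝ}

theorem abs_le_of_add_mulVec_eq {b : ℝ} (hQ : ∀ k j, |Q k j| ≤ b) (h : z + Q *ᵥ z = s) (k : ι) :
    |z k| ≤ |s k| + b * ∑ j, |z j| := by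
  have hz : z k = s k - (Q *ᵥ z) k := by rw [← h]; simp
  calc |z k| ≤ |s k| + ∑ j, |Q k j| * |z j| := by
        rw [hz]; exact (abs_sub _ _).trans (by gcongr; exact abs_mulVec_le Q z k)
    _ ≤ |s k| + ∑ j, b * |z j| := by gcongr with j; exact hQ k j
    _ = |s k| + b * ∑ j, |z j| := by rw [mul_sum]

theorem two_mul_abs_sum_le_of_add_mulVec_eq (hQ : ∀ k j, 0 ≤ Q k j) (hcol : ∀ j, ∑ k, Q k j ≤ 1)
    (h : z + Q *ᵥ z = s) : 2 * |∑ k, z k| ≤ ∑ k, |s k| + ∑ k, |z k| := by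
  have hsum : 2 * ∑ k, z k = ∑ k, s k + ∑ j, (1 - ∑ k, Q k j) * z j := by
    have : ∑ k, (Q *ᵥ z) k = ∑ j, (∑ k, Q k j) * z j := by
      simp only [mulVec, dotProduct]; rw [sum_comm]; simp_rw [sum_mul]
    simp only [← h, Pi.add_apply, sum_add_distrib, this, sub_mul, one_mul, sum_sub_distrib]
    ring
  have hweight : ∀ j, |1 - ∑ k, Q k j| ≤ 1 := fun j =>
    abs_le.2 ⟨by linarith [hcol j], by linarith [sum_nonneg fun k (_ : k ∈ univ) => hQ k j]⟩
  calc 2 * |∑ k, z k| = |∑ k, s k + ∑ j, (1 - ∑ k, Q k j) * z j| := by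
        rw [← hsum, abs_mul, abs_two]
    _ ≤ ∑ k, |s k| + ∑ j, |1 - ∑ k, Q k j| * |z j| := by
        refine (abs_add_le _ _).trans (add_le_add (abs_sum_le_sum_abs _ _) ?_)
        exact (abs_sum_le_sum_abs _ _).trans_eq (by simp only [abs_mul])
    _ ≤ ∑ k, |s k| + ∑ j, |z j| := by
        gcongr with j
        exact mul_le_of_le_one_left (abs_nonneg _) (hweight j)

theorem mul_sum_abs_le_add_of_add_mulVec_eq {a : ℝ} (ha : 0 ≤ a) (hQ : ∀ k j, 0 ≤ Q k j)
    (hoff : ∀ k j, k ≠ j → a ≤ Q k j) (hcol : ∀ j, ∑ k, Q k j ≤ 1) (h : z + Q *ᵥ z = s) :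
    a * (Fintype.card ι - 2) * ∑ k, |z k| ≤ ∑ k, |s k| + a * Fintype.card ι * |∑ k, z k| := by
  classical
  set R : Matrix ι ι ℝ := of fun k j => Q k j - a + if k = j then a else 0
  have hR : ∀ k j, 0 ≤ R k j := fun k j => by
    by_cases hkj : k = j
    · simpa [R, hkj] using hQ j j
    · simpa [R, hkj] using hoff k j hkj
  have hRcol : ∀ j, ∑ k, |R k j| ≤ 1 - a * (Fintype.card ι - 1) := fun j => by
    rw [sum_congr rfl fun k _ => abs_of_nonneg (hR k j)]
    simp only [R, of_apply, sum_add_distrib, sum_sub_distrib, sum_ite_eq', mem_univ, if_true,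
      sum_const, card_univ, nsmul_eq_mul]
    linarith [hcol j]
  have hRz : ∀ k, z k = s k - (R *ᵥ z) k - a * ∑ j, z j + a * z k := fun k => by
    have : (R *ᵥ z) k = (Q *ᵥ z) k - a * ∑ j, z j + a * z k := by
      simp [R, mulVec, dotProduct, add_mul, sub_mul, sum_add_distrib, mul_sum]
    rw [this, ← h]; simp only [Pi.add_apply]; ring
  have hpt : ∀ k, |z k| ≤ |s k| + |(R *ᵥ z) k| + a * |∑ j, z j| + a * |z k| := fun k => by
    rw [← abs_of_nonneg ha, ← abs_mul, ← abs_mul]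
    calc |z k| = |s k - (R *ᵥ z) k - a * ∑ j, z j + a * z k| := by rw [← hRz]
      _ ≤ |s k - (R *ᵥ z) k - a * ∑ j, z j| + |a * z k| := abs_add_le _ _
      _ ≤ |s k - (R *ᵥ z) k| + |a * ∑ j, z j| + |a * z k| := by gcongr; exact abs_sub _ _
      _ ≤ _ := by gcongr; exact abs_sub _ _
  have hsum := sum_le_sum fun k (_ : k ∈ univ) => hpt k
  simp only [sum_add_distrib, sum_const, card_univ, nsmul_eq_mul, ← mul_sum] at hsum
  nlinarith [sum_abs_mulVec_le_s7 hRcol z]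

theorem mul_card_mul_sum_abs_le_of_add_mulVec_eq {a : ℝ} (ha : 0 ≤ a) (hn : 8 ≤ Fintype.card ι)
    (han : a * Fintype.card ι ≤ 1) (hQ : ∀ k j, 0 ≤ Q k j) (hoff : ∀ k j, k ≠ j → a ≤ Q k j)
    (hcol : ∀ j, ∑ k, Q k j ≤ 1) (h : z + Q *ᵥ z = s) :
    a * Fintype.card ι * ∑ k, |z k| ≤ 6 * ∑ k, |s k| := by
  have hz := mul_sum_abs_le_add_of_add_mulVec_eq ha hQ hoff hcol h
  have ht := mul_le_mul_of_nonneg_left (two_mul_abs_sum_le_of_add_mulVec_eq hQ hcol h)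
    (by positivity : 0 ≤ a * Fintype.card ι)
  have hn8 : (8 : ℝ) ≤ Fintype.card ι := by exact_mod_cast hn
  have hZ := sum_nonneg fun k (_ : k ∈ univ) => abs_nonneg (z k)
  have hS := sum_nonneg fun k (_ : k ∈ univ) => abs_nonneg (s k)
  nlinarith [mul_nonneg (mul_nonneg ha (sub_nonneg.2 hn8)) hZ, mul_nonneg (sub_nonneg.2 han) hS]

theorem abs_le_one_add_of_add_mulVec_eq {a b : ℝ} (ha : 0 < a) (hn : 8 ≤ Fintype.card ι)
    (han : a * Fintype.card ι ≤ 1) (hQ : ∀ k j, 0 ≤ Q k j) (hoff : ∀ k j, k ≠ j → a ≤ Q k j)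
    (hcol : ∀ j, ∑ k, Q k j ≤ 1) (hQb : ∀ k j, |Q k j| ≤ b) (h : z + Q *ᵥ z = s)
    (hs : ∀ k, |s k| ≤ 1) (k : ι) : |z k| ≤ 1 + 6 * b / a := by
  have hn0 : (0 : ℝ) < Fintype.card ι := by exact_mod_cast (by omega : 0 < Fintype.card ι)
  have hS : ∑ k, |s k| ≤ Fintype.card ι := by simpa using sum_le_sum fun k (_ : k ∈ univ) => hs k
  have hZ : ∑ j, |z j| ≤ 6 / a := by
    rw [le_div_iff₀' ha, ← mul_le_mul_iff_of_pos_left hn0]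
    linarith [mul_card_mul_sum_abs_le_of_add_mulVec_eq ha.le hn han hQ hoff hcol h]
  have hb : 0 ≤ b := (abs_nonneg _).trans (hQb k k)
  calc |z k| ≤ |s k| + b * ∑ j, |z j| := abs_le_of_add_mulVec_eq hQb h k
    _ ≤ 1 + b * (6 / a) := by gcongr; exact hs k
    _ = 1 + 6 * b / a := by ring

end AddMulVec

section ColumnDominant

variable {ι : Type*} [DecidableEq ι] {m M : ℝ} {A : Matrix ι ι ℝ}

noncomputable def offDiagDivDiag (A : Matrix ι ι ℝ) : Matrix ι ι ℝ :=
  of fun k j => if k = j then 0 else A k j / A j j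

@[simp]
theorem offDiagDivDiag_apply_self (j : ι) : offDiagDivDiag A j j = 0 :=
  if_pos rfl

theorem offDiagDivDiag_apply_of_ne {k j : ι} (h : k ≠ j) : offDiagDivDiag A k j = A k j / A j j :=
  if_neg h

theorem offDiagDivDiag_nonneg (hoff : ∀ i j, i ≠ j → 0 ≤ A i j) (hdiag : ∀ i, 0 ≤ A i i)
    (k j : ι) : 0 ≤ offDiagDivDiag A k j := by
  by_cases h : k = j
  · simp [h]
  · rw [offDiagDivDiag_apply_of_ne h]; exact div_nonneg (hoff k j h) (hdiag j)

theorem div_le_offDiagDivDiag {d : ℝ} (hm : 0 ≤ m) (hoff : ∀ i j, i ≠ j → m ≤ A i j)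
    (hpos : ∀ i, 0 < A i i) (hdiag : ∀ i, A i i ≤ d) {k j : ι} (h : k ≠ j) :
    m / d ≤ offDiagDivDiag A k j := by
  rw [offDiagDivDiag_apply_of_ne h]
  exact div_le_div₀ (hm.trans (hoff k j h)) (hoff k j h) (hpos j) (hdiag j)

theorem offDiagDivDiag_le_div {d : ℝ} (hM : 0 ≤ M) (hoff : ∀ i j, i ≠ j → A i j ≤ M) (hd : 0 < d)
    (hdiag : ∀ i, d ≤ A i i) (k j : ι) : offDiagDivDiag A k j ≤ M / d := by
  by_cases h : k = j
  · rw [h, offDiagDivDiag_apply_self]; positivity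
  · rw [offDiagDivDiag_apply_of_ne h]; exact div_le_div₀ hM (hoff k j h) hd (hdiag j)

variable [Fintype ι]

theorem card_sub_one_mul_le_diag (hoff : ∀ i j, i ≠ j → m ≤ A i j)
    (hdom : ∀ i, 0 ≤ A i i - ∑ j ∈ univ.erase i, A j i) (i : ι) :
    (Fintype.card ι - 1) * m ≤ A i i := by
  have := card_nsmul_le_sum (univ.erase i) (fun j => A j i) m fun j hj =>
    hoff j i (ne_of_mem_erase hj)
  rw [nsmul_eq_mul, cast_card_erase_of_mem (mem_univ i), card_univ] at this
  linarith [hdom i]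

theorem diag_le_card_mul (hoff : ∀ i j, i ≠ j → A i j ≤ M)
    (hdom : ∀ i, A i i - ∑ j ∈ univ.erase i, A j i ≤ M) (i : ι) :
    A i i ≤ Fintype.card ι * M := by
  have := sum_le_card_nsmul (univ.erase i) (fun j => A j i) M fun j hj =>
    hoff j i (ne_of_mem_erase hj)
  rw [nsmul_eq_mul, cast_card_erase_of_mem (mem_univ i), card_univ] at this
  linarith [hdom i]

theorem add_offDiagDivDiag_mulVec (hA : ∀ j, A j j ≠ 0) (u : ι → ℝ) :
    (fun j => A j j * u j) + offDiagDivDiag A *ᵥ (fun j => A j j * u j) = A *ᵥ u := by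
  ext k
  simp only [Pi.add_apply, mulVec, dotProduct]
  rw [← add_sum_erase _ _ (mem_univ k), ← add_sum_erase _ _ (mem_univ k), offDiagDivDiag_apply_self,
    zero_mul, zero_add]
  congr 1
  refine sum_congr rfl fun j hj => ?_
  rw [offDiagDivDiag_apply_of_ne (ne_of_mem_erase hj).symm]
  field_simp [hA j]

theorem sum_offDiagDivDiag_le_one (hdom : ∀ i, 0 ≤ A i i - ∑ j ∈ univ.erase i, A j i)
    (hdiag : ∀ i, 0 ≤ A i i) (j : ι) : ∑ k, offDiagDivDiag A k j ≤ 1 := by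
  rw [← add_sum_erase _ _ (mem_univ j), sum_congr rfl fun k hk =>
    offDiagDivDiag_apply_of_ne (ne_of_mem_erase hk), ← sum_div, offDiagDivDiag_apply_self, zero_add]
  exact div_le_one_of_le₀ (by linarith [hdom j]) (hdiag j)

theorem abs_le_of_mulVec_eq (hm : 0 < m) (hmM : m ≤ M) (hn : 8 ≤ Fintype.card ι)
    (hoff : ∀ i j, i ≠ j → m ≤ A i j ∧ A i j ≤ M)
    (hdom : ∀ i, 0 ≤ A i i - ∑ j ∈ univ.erase i, A j i ∧ A i i - ∑ j ∈ univ.erase i, A j i ≤ M)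
    {u s : ι → ℝ} (hu : A *ᵥ u = s) (hs : ∀ k, |s k| ≤ 1) (k : ι) :
    |u k| ≤ 2 * (1 + 12 * (M / m) ^ 2) / m / Fintype.card ι := by
  have hlow := card_sub_one_mul_le_diag (fun i j h => (hoff i j h).1) (fun i => (hdom i).1)
  have hup := diag_le_card_mul (fun i j h => (hoff i j h).2) (fun i => (hdom i).2)
  set n : ℝ := (Fintype.card ι : ℝ)
  have hn8 : (8 : ℝ) ≤ n := by simp only [n]; exact_mod_cast hn
  have hn1 : 0 < n - 1 := by linarith
  have hM : 0 < M := hm.trans_le hmM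
  have hpos : ∀ j, 0 < A j j := fun j => lt_of_lt_of_le (by positivity) (hlow j)
  have hQ := offDiagDivDiag_nonneg (fun i j h => hm.le.trans (hoff i j h).1) (fun i => (hpos i).le)
  have hmn : m / (n * M) * n = m / M := by field_simp
  have hzk := abs_le_one_add_of_add_mulVec_eq (a := m / (n * M)) (b := M / ((n - 1) * m))
    (by positivity) hn (hmn ▸ div_le_one_of_le₀ hmM hM.le) hQ
    (fun k j => div_le_offDiagDivDiag hm.le (fun i j h => (hoff i j h).1) hpos hup)
    (sum_offDiagDivDiag_le_one (fun i => (hdom i).1) (fun i => (hpos i).le))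
    (fun k j => (abs_of_nonneg (hQ k j)).trans_le <|
      offDiagDivDiag_le_div hM.le (fun i j h => (hoff i j h).2) (by positivity) hlow k j)
    (hu ▸ add_offDiagDivDiag_mulVec (fun j => (hpos j).ne') u) hs k
  have hconst : 6 * (M / ((n - 1) * m)) / (m / (n * M)) ≤ 12 * (M / m) ^ 2 :=
    calc _ = 6 * (M / m) ^ 2 * (n / (n - 1)) := by field_simp
      _ ≤ 6 * (M / m) ^ 2 * 2 := by gcongr; rw [div_le_iff₀ (by linarith)]; linarith
      _ = 12 * (M / m) ^ 2 := by ring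
  calc |u k| = |A k k * u k| / A k k := by
        rw [abs_mul, abs_of_pos (hpos k), mul_div_cancel_left₀ _ (hpos k).ne']
    _ ≤ (1 + 12 * (M / m) ^ 2) / ((n - 1) * m) :=
        div_le_div₀ (by positivity) (by linarith) (by positivity) (hlow k)
    _ ≤ 2 * (1 + 12 * (M / m) ^ 2) / m / n := by
        rw [div_div, div_le_div_iff₀ (by positivity) (by positivity)]
        nlinarith [mul_nonneg (by positivity : (0 : ℝ) ≤ (1 + 12 * (M / m) ^ 2) * m)
          (by linarith : (0 : ℝ) ≤ n - 2)]

end ColumnDominant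

/-- row-norm bound `‖A⁻¹‖_∞ ≤ C/n` for the inverse of a
column-diagonally-dominant positive matrix. -/
theorem inverse_row_norm_bound
    (m M : ℝ) (hm : 0 < m) (hmM : m ≤ M) :
    ∃ C : ℝ, 0 < C ∧ ∃ n₀ : ℕ, 2 ≤ n₀ ∧
      ∀ n : ℕ, n₀ ≤ n →
        ∀ A : Matrix (Fin n) (Fin n) ℝ, IsUnit A.det →
          (∀ i j : Fin n, i ≠ j → m ≤ A i j ∧ A i j ≤ M) →
          (∀ i : Fin n, 0 ≤ A i i - ∑ j ∈ univ.erase i, A j i ∧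
            A i i - ∑ j ∈ univ.erase i, A j i ≤ M) →
          ∀ i : Fin n, ∑ j, |A⁻¹ i j| ≤ C / (n : ℝ) := by
  refine ⟨2 * (1 + 12 * (M / m) ^ 2) / m, by positivity, 8, by norm_num,
    fun n hn A hdet hoff hdom i => ?_⟩
  set s : Fin n → ℝ := fun j => SignType.sign (A⁻¹ i j)
  have hu : A *ᵥ (A⁻¹ *ᵥ s) = s := by rw [mulVec_mulVec, mul_nonsing_inv A hdet, one_mulVec]
  have hs : ∀ j, |s j| ≤ 1 := fun j => by
    simp only [s]; generalize SignType.sign (A⁻¹ i j) = σ; cases σ <;> simp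
  calc ∑ j, |A⁻¹ i j| = (A⁻¹ *ᵥ s) i := by simp [s, mulVec, dotProduct]
    _ ≤ |(A⁻¹ *ᵥ s) i| := le_abs_self _
    _ ≤ _ := by
      simpa using abs_le_of_mulVec_eq hm hmM (by simpa using hn) hoff hdom hu hs i
end

section
/- For all real numbers 0 < m ≤ M there exists an integer n₀ ≥ 2 such that: for every n ≥ n₀, every n×n real matrix A = (a_{ij}) satisfying −M ≤ a_{ij} ≤ −m for all i ≠ j and a_{ii} = Σ_{j≠i} a_{ji} for every i, is invertible. (Nonsingularity of the column-balanced Jacobian matrix J₁₁; deterministic core of Lemma A.2.) -/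
open Finset

/-- Auxiliary: if `v` satisfies the key balanced identities, `A` has negative
off-diagonal entries, and `v k` dominates all `|v j|`, then `v j = -v k` off `k`. -/
lemma column_balanced_aux {n : ℕ} (A : Matrix (Fin n) (Fin n) ℝ) (v : Fin n → ℝ)
    (hA : ∀ i j : Fin n, i ≠ j → A i j < 0)
    (hkey : ∀ i : Fin n, ∑ j ∈ univ.erase i, (v i + v j) * A j i = 0)
    (k : Fin n) (hmax : ∀ j, |v j| ≤ v k) :
    ∀ j, j ≠ k → v j = -v k := by
  intro j hj
  have hnonpos : ∀ l ∈ univ.erase k, (v k + v l) * A l k ≤ 0 := by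
    intro l hl
    have hl' : l ≠ k := (Finset.mem_erase.1 hl).1
    have h1 : 0 ≤ v k + v l := by
      have := (abs_le.1 (hmax l)).1
      linarith
    exact mul_nonpos_of_nonneg_of_nonpos h1 (le_of_lt (hA l k hl'))
  have h := (Finset.sum_eq_zero_iff_of_nonpos hnonpos).1 (hkey k) j
    (Finset.mem_erase.2 ⟨hj, Finset.mem_univ j⟩)
  rcases mul_eq_zero.1 h with h1 | h2
  · linarith
  · exact absurd h2 (ne_of_lt (hA j k hj))

/-- nonsingularity of a column-balanced matrix with negative
off-diagonal entries bounded away from zero (deterministic core of Lemma A.2). -/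
theorem column_balanced_matrix_nonsingular
    (m M : ℝ) (hm : 0 < m) (hmM : m ≤ M) :
    ∃ n₀ : ℕ, 2 ≤ n₀ ∧
      ∀ n : ℕ, n₀ ≤ n →
        ∀ A : Matrix (Fin n) (Fin n) ℝ,
          (∀ i j : Fin n, i ≠ j → -M ≤ A i j ∧ A i j ≤ -m) →
          (∀ i : Fin n, A i i = ∑ j ∈ univ.erase i, A j i) →
          IsUnit A.det := by
  refine ⟨3, by norm_num, ?_⟩
  intro n hn A hoff hdiag
  rw [isUnit_iff_ne_zero]
  intro hdet
  obtain ⟨v, hv, hvA⟩ := Matrix.exists_vecMul_eq_zero_iff.2 hdet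
  have hA : ∀ i j : Fin n, i ≠ j → A i j < 0 := fun i j hij =>
    lt_of_le_of_lt (hoff i j hij).2 (by linarith)
  -- the key identity
  have hkeyv : ∀ i : Fin n, ∑ j ∈ univ.erase i, (v i + v j) * A j i = 0 := by
    intro i
    have h0 : ∑ j, v j * A j i = 0 := by
      have := congrFun hvA i
      simpa [Matrix.vecMul, dotProduct] using this
    have hsplit : ∑ j ∈ univ.erase i, v j * A j i + v i * A i i = 0 := by
      rw [Finset.sum_erase_add _ _ (Finset.mem_univ i)]; exact h0
    rw [hdiag i, Finset.mul_sum, ← Finset.sum_add_distrib] at hsplit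
    rw [← hsplit]
    exact Finset.sum_congr rfl (fun j _ => by ring)
  -- the key identity is stable under negation of v
  have hkeyneg : ∀ (u : Fin n → ℝ),
      (∀ i : Fin n, ∑ j ∈ univ.erase i, (u i + u j) * A j i = 0) →
      ∀ i : Fin n, ∑ j ∈ univ.erase i, ((-u) i + (-u) j) * A j i = 0 := by
    intro u hu i
    have : ∑ j ∈ univ.erase i, ((-u) i + (-u) j) * A j i
        = -∑ j ∈ univ.erase i, (u i + u j) * A j i := by
      rw [← Finset.sum_neg_distrib]
      exact Finset.sum_congr rfl (fun j _ => by simp; ring)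
    rw [this, hu i, neg_zero]
  -- pick k maximizing |v|
  obtain ⟨k, -, hk⟩ := Finset.exists_max_image (univ : Finset (Fin n)) (fun j => |v j|)
    ⟨⟨0, by omega⟩, Finset.mem_univ _⟩
  have hkmax : ∀ j, |v j| ≤ |v k| := fun j => hk j (Finset.mem_univ j)
  have hvkpos : 0 < |v k| := by
    obtain ⟨i, hi⟩ := Function.ne_iff.1 hv
    exact lt_of_lt_of_le (abs_pos.2 hi) (hkmax i)
  -- WLOG via w := v or -v so that w k = |v k| > 0
  obtain ⟨w, hwkey, hwmax, hwkpos⟩ :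
      ∃ w : Fin n → ℝ, (∀ i : Fin n, ∑ j ∈ univ.erase i, (w i + w j) * A j i = 0)
        ∧ (∀ j, |w j| ≤ w k) ∧ 0 < w k := by
    rcases le_or_gt 0 (v k) with h | h
    · exact ⟨v, hkeyv, fun j => by rw [← abs_of_nonneg h]; exact hkmax j,
        by rwa [abs_of_nonneg h] at hvkpos⟩
    · refine ⟨-v, hkeyneg v hkeyv, fun j => ?_, ?_⟩
      · simp only [Pi.neg_apply, abs_neg]
        rw [show -v k = |v k| from (abs_of_neg h).symm]; exact hkmax j
      · simp only [Pi.neg_apply]; linarith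
  -- all other coordinates equal -w k
  have h1 : ∀ j, j ≠ k → w j = -w k := column_balanced_aux A w hA hwkey k hwmax
  -- pick j ≠ k and r ∉ {k, j}
  have hcard : 1 < Fintype.card (Fin n) := by simp; omega
  obtain ⟨j, hj⟩ := Fintype.exists_ne_of_one_lt_card hcard k
  have hexr : ∃ r : Fin n, r ≠ k ∧ r ≠ j := by
    by_contra h
    push_neg at h
    have hsub : (univ : Finset (Fin n)) ⊆ {k, j} := by
      intro r _
      rcases eq_or_ne r k with h' | h'
      · simp [h']
      · simp [h r h']
    have := Finset.card_le_card hsub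
    have h2 : ({k, j} : Finset (Fin n)).card ≤ 2 :=
      le_trans (Finset.card_insert_le _ _) (by simp)
    simp [Finset.card_univ] at this
    omega
  obtain ⟨r, hrk, hrj⟩ := hexr
  -- apply aux at j with -w
  have hwj : w j = -w k := h1 j hj
  have h2 : ∀ l, l ≠ j → (-w) l = -(-w) j := by
    apply column_balanced_aux A (-w) hA (hkeyneg w hwkey) j
    intro l
    simp only [Pi.neg_apply, abs_neg, hwj, neg_neg]
    exact hwmax l
  have hr1 : w r = -w k := h1 r hrk
  have hr2 : (-w) r = -(-w) j := h2 r hrj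
  simp only [Pi.neg_apply, hwj, neg_neg] at hr2
  -- hr2 : -w r = -w k, hr1 : w r = -w k  ⇒ w k = 0
  have : w k = 0 := by linarith [hr2, hr1]
  linarith
end

section
/- For all constants c₁, c₂ ∈ (0, 1/2] there exist a constant C > 0 and an integer n₀ ≥ 2, depending only on c₁ and c₂, such that the following holds: for every instance of the dyadic fixed-effects setup with n ≥ n₀, and all α₀, α̂ ∈ D such that Σ_{j≠i} p_{ij}(α̂) = d_i for every i = 1, …, n, one has ‖α̂ − α₀‖_∞ ≤ (C/n)·max_{1≤i≤n} |d_i − Σ_{j≠i} p_{ij}(α₀)|. (Deterministic sup-norm error bound for any root of the degree moment equations; core of Lemma A.5.) -/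
/-!
The mean value theorem turns the difference of the degree equations at `α̂` and `α₀` into a
linear system `E = T u` for `u = α̂ - α₀`, where `E i = ∑_{j ≠ i} (t i j * u i + t j i * u j)`
and `δ ≤ t i j ≤ 1`. Split the coordinates by the sign of `u`. Weighting row `i` by the sign
of `u i` cancels all terms between the two sign classes, so the `ℓ¹` mass of `u` on a class `S`
is at most `∑ |E i| / (2δ(#S - 1))`, which is `O(max |E| / δ)` for the larger class. A single
row bounds `(n - 1) δ |u i|` by `|E i|` plus the mass of the opposite class: this controls first
the smaller class, then through its total mass the larger one.
-/

open Finset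

theorem exists_sub_eq_mul_sub_of_convex {F f : ℝ → ℝ} (hF : ∀ t, HasDerivAt F (f t) t)
    {s : Set ℝ} (hs : Convex ℝ s) {a b : ℝ} (ha : a ∈ s) (hb : b ∈ s) :
    ∃ c ∈ s, F b - F a = f c * (b - a) := by
  have hg : ∀ θ : ℝ,
      HasDerivAt (fun θ => F (a + θ * (b - a))) (f (a + θ * (b - a)) * (b - a)) θ := fun θ =>
    (hF _).comp θ ((hasDerivAt_mul_const (b - a)).const_add a)
  obtain ⟨θ, hθ, hslope⟩ := exists_hasDerivAt_eq_slope _ _ zero_lt_one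
    (fun θ _ => (hg θ).continuousAt.continuousWithinAt) (fun θ _ => hg θ)
  refine ⟨a + θ * (b - a), hs.add_smul_sub_mem ha hb ⟨hθ.1.le, hθ.2.le⟩, ?_⟩
  rw [hslope]
  simp

section LinearizedDegree

variable {ι : Type*} [Fintype ι] [DecidableEq ι]

/-- For `u = α̂ - α₀` and suitable mean-value coefficients `t`, this is
`∑_{j ≠ i} (p i j α̂ - p i j α₀)` (see `exists_linearizedDegree_eq`). -/
def linearizedDegree (t : ι → ι → ℝ) (u : ι → ℝ) (i : ι) : ℝ :=
  ∑ j ∈ univ.erase i, (t i j * u i + t j i * u j)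

theorem linearizedDegree_neg (t : ι → ι → ℝ) (u : ι → ℝ) (i : ι) :
    linearizedDegree t (-u) i = -linearizedDegree t u i := by
  simp only [linearizedDegree, Pi.neg_apply, ← sum_neg_distrib]
  exact sum_congr rfl fun j _ => by ring

theorem sum_mul_linearizedDegree (t : ι → ι → ℝ) (u s : ι → ℝ) :
    ∑ i, s i * linearizedDegree t u i = ∑ i, ∑ j ∈ univ.erase i, t i j * u i * (s i + s j) := by
  have hswap : ∑ i, ∑ j ∈ univ.erase i, s i * (t j i * u j)
      = ∑ i, ∑ j ∈ univ.erase i, s j * (t i j * u i) :=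
    sum_comm' fun i j => by simp [and_comm, ne_comm]
  calc ∑ i, s i * linearizedDegree t u i
      = ∑ i, ∑ j ∈ univ.erase i, s i * (t i j * u i)
        + ∑ i, ∑ j ∈ univ.erase i, s i * (t j i * u j) := by
        simp only [linearizedDegree, mul_sum, mul_add, sum_add_distrib]
    _ = ∑ i, ∑ j ∈ univ.erase i, t i j * u i * (s i + s j) := by
        rw [hswap, ← sum_add_distrib]
        refine sum_congr rfl fun i _ => ?_
        rw [← sum_add_distrib]
        exact sum_congr rfl fun j _ => by ring

def IsSignSplit (u : ι → ℝ) (S : Finset ι) : Prop :=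
  (∀ i ∈ S, 0 ≤ u i) ∧ ∀ i ∉ S, u i ≤ 0

theorem IsSignSplit.neg_compl {u : ι → ℝ} {S : Finset ι} (hS : IsSignSplit u S) :
    IsSignSplit (-u) Sᶜ :=
  ⟨fun i hi => neg_nonneg.2 (hS.2 i (mem_compl.1 hi)),
    fun i hi => neg_nonpos.2 (hS.1 i (by simpa using hi))⟩

variable {t : ι → ι → ℝ} {u : ι → ℝ} {S : Finset ι} {δ : ℝ}

theorem IsSignSplit.mul_le_linearizedDegree_add_sum_compl (hS : IsSignSplit u S) (hδ : 0 ≤ δ)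
    (ht : ∀ i j, i ≠ j → t i j ∈ Set.Icc δ 1) {i : ι} (hi : i ∈ S) :
    ((Fintype.card ι : ℝ) - 1) * δ * u i ≤ linearizedDegree t u i + ∑ j ∈ Sᶜ, |u j| := by
  have hterm : ∀ j ∈ univ.erase i,
      δ * u i - (if j ∈ Sᶜ then |u j| else 0) ≤ t i j * u i + t j i * u j := by
    intro j hj
    have hji := ne_of_mem_erase hj
    have h₁ : δ * u i ≤ t i j * u i := mul_le_mul_of_nonneg_right (ht i j hji.symm).1 (hS.1 i hi)
    obtain ⟨htji₁, htji₂⟩ := ht j i hji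
    split_ifs with hjS
    · have huj := hS.2 j (mem_compl.1 hjS)
      rw [abs_of_nonpos huj]
      nlinarith
    · have huj := hS.1 j (by simpa using hjS)
      nlinarith
  have hcompl : ∑ j ∈ univ.erase i, (if j ∈ Sᶜ then |u j| else 0) ≤ ∑ j ∈ Sᶜ, |u j| := by
    rw [sum_ite_mem]
    exact sum_le_sum_of_subset_of_nonneg inter_subset_right fun j _ _ => abs_nonneg _
  have hsum := sum_le_sum hterm
  rw [sum_sub_distrib, sum_const, card_erase_of_mem (mem_univ i), card_univ, nsmul_eq_mul,
    Nat.cast_pred (Fintype.card_pos_iff.2 ⟨i⟩)] at hsum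
  unfold linearizedDegree
  linarith

theorem IsSignSplit.mul_sum_le_sum_abs_linearizedDegree (hS : IsSignSplit u S) (hδ : 0 ≤ δ)
    (ht : ∀ i j, i ≠ j → t i j ∈ Set.Icc δ 1) :
    2 * δ * ((#S : ℝ) - 1) * ∑ i ∈ S, u i ≤ ∑ i, |linearizedDegree t u i| := by
  set s : ι → ℝ := fun i => if i ∈ S then 1 else -1
  have hnonneg : ∀ i j, i ≠ j → 0 ≤ t i j * u i * (s i + s j) := by
    intro i j hij
    rw [mul_assoc]
    refine mul_nonneg (hδ.trans (ht i j hij).1) ?_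
    by_cases hi : i ∈ S
    · have := hS.1 i hi
      simp only [s, hi, if_true]
      split_ifs <;> nlinarith
    · have := hS.2 i hi
      simp only [s, hi, if_false]
      split_ifs <;> nlinarith
  have hsame : ∀ i ∈ S, ∀ j ∈ S.erase i, 2 * δ * u i ≤ t i j * u i * (s i + s j) := by
    intro i hi j hj
    have hjS := mem_of_mem_erase hj
    simp only [s, hi, hjS, if_true]
    nlinarith [mul_le_mul_of_nonneg_right (ht i j (ne_of_mem_erase hj).symm).1 (hS.1 i hi)]
  calc 2 * δ * ((#S : ℝ) - 1) * ∑ i ∈ S, u i = ∑ i ∈ S, ∑ j ∈ S.erase i, 2 * δ * u i := by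
        rw [mul_sum]
        refine sum_congr rfl fun i hi => ?_
        rw [sum_const, card_erase_of_mem hi, nsmul_eq_mul, Nat.cast_pred (card_pos.2 ⟨i, hi⟩)]
        ring
    _ ≤ ∑ i ∈ S, ∑ j ∈ S.erase i, t i j * u i * (s i + s j) :=
        sum_le_sum fun i hi => sum_le_sum (hsame i hi)
    _ ≤ ∑ i ∈ S, ∑ j ∈ univ.erase i, t i j * u i * (s i + s j) :=
        sum_le_sum fun i _ => sum_le_sum_of_subset_of_nonneg (erase_subset_erase _ (subset_univ _))
          fun j hj _ => hnonneg i j (ne_of_mem_erase hj).symm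
    _ ≤ ∑ i, ∑ j ∈ univ.erase i, t i j * u i * (s i + s j) :=
        sum_le_sum_of_subset_of_nonneg (subset_univ S) fun i _ _ =>
          sum_nonneg fun j hj => hnonneg i j (ne_of_mem_erase hj).symm
    _ = ∑ i, s i * linearizedDegree t u i := (sum_mul_linearizedDegree t u s).symm
    _ ≤ ∑ i, |linearizedDegree t u i| := by
        refine sum_le_sum fun i _ => ?_
        simp only [s]
        split_ifs
        · simpa using le_abs_self _
        · simpa using neg_le_abs _

theorem IsSignSplit.mul_abs_le (hS : IsSignSplit u S) (hn : 4 ≤ Fintype.card ι)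
    (hδ₀ : 0 < δ) (hδ₁ : δ ≤ 1) (ht : ∀ i j, i ≠ j → t i j ∈ Set.Icc δ 1)
    (hcard : Fintype.card ι ≤ 2 * #S) {B : ℝ} (hB : ∀ i, |linearizedDegree t u i| ≤ B) (i : ι) :
    ((Fintype.card ι : ℝ) - 1) * δ ^ 3 * |u i| ≤ 4 * B := by
  have hn' : (4 : ℝ) ≤ Fintype.card ι := by exact_mod_cast hn
  have hcard' : (Fintype.card ι : ℝ) ≤ 2 * #S := by exact_mod_cast hcard
  have hcompl : (#Sᶜ : ℝ) + #S = Fintype.card ι := by exact_mod_cast card_compl_add_card S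
  have hB₀ : 0 ≤ B := (abs_nonneg _).trans (hB i)
  have hsumB : ∑ j, |linearizedDegree t u j| ≤ Fintype.card ι * B := by
    simpa using sum_le_sum fun j (_ : j ∈ univ) => hB j
  have hpos : δ * ∑ j ∈ S, u j ≤ 2 * B := by
    have hclass := hS.mul_sum_le_sum_abs_linearizedDegree hδ₀.le ht
    have hsum₀ : 0 ≤ δ * ∑ j ∈ S, u j := mul_nonneg hδ₀.le (sum_nonneg hS.1)
    nlinarith
  have hneg : ∀ j ∉ S, ((Fintype.card ι : ℝ) - 1) * δ ^ 2 * |u j| ≤ 3 * B := by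
    intro j hj
    have hrow := hS.neg_compl.mul_le_linearizedDegree_add_sum_compl hδ₀.le ht (mem_compl.2 hj)
    simp only [compl_compl, linearizedDegree_neg, Pi.neg_apply, abs_neg] at hrow
    rw [sum_congr rfl fun k hk => abs_of_nonneg (hS.1 k hk)] at hrow
    have hrow' : ((Fintype.card ι : ℝ) - 1) * δ * |u j| ≤ B + ∑ k ∈ S, u k := by
      rw [abs_of_nonpos (hS.2 j hj)]
      linarith [(abs_le.1 (hB j)).1]
    calc ((Fintype.card ι : ℝ) - 1) * δ ^ 2 * |u j|
        = δ * (((Fintype.card ι : ℝ) - 1) * δ * |u j|) := by ring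
      _ ≤ δ * (B + ∑ k ∈ S, u k) := mul_le_mul_of_nonneg_left hrow' hδ₀.le
      _ ≤ 3 * B := by nlinarith
  have hneg_sum : δ ^ 2 * ∑ j ∈ Sᶜ, |u j| ≤ 3 * B := by
    have h := sum_le_sum fun j hj => hneg j (mem_compl.1 hj)
    rw [← mul_sum, sum_const, nsmul_eq_mul] at h
    nlinarith [sum_nonneg fun j (_ : j ∈ Sᶜ) => abs_nonneg (u j)]
  by_cases hi : i ∈ S
  · have hrow : ((Fintype.card ι : ℝ) - 1) * δ * |u i| ≤ B + ∑ j ∈ Sᶜ, |u j| := by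
      rw [abs_of_nonneg (hS.1 i hi)]
      linarith [hS.mul_le_linearizedDegree_add_sum_compl hδ₀.le ht hi, (abs_le.1 (hB i)).2]
    calc ((Fintype.card ι : ℝ) - 1) * δ ^ 3 * |u i|
        = δ ^ 2 * (((Fintype.card ι : ℝ) - 1) * δ * |u i|) := by ring
      _ ≤ δ ^ 2 * (B + ∑ j ∈ Sᶜ, |u j|) := mul_le_mul_of_nonneg_left hrow (by positivity)
      _ ≤ 4 * B := by
        nlinarith [mul_le_of_le_one_left hB₀ (pow_le_one₀ (n := 2) hδ₀.le hδ₁)]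
  · nlinarith [hneg i hi]

theorem abs_le_iSup_abs_linearizedDegree (hn : 4 ≤ Fintype.card ι) (hδ₀ : 0 < δ) (hδ₁ : δ ≤ 1)
    (ht : ∀ i j, i ≠ j → t i j ∈ Set.Icc δ 1) (i : ι) :
    |u i| ≤ 8 / δ ^ 3 / Fintype.card ι * ⨆ j, |linearizedDegree t u j| := by
  set B := ⨆ j, |linearizedDegree t u j|
  have hB : ∀ j, |linearizedDegree t u j| ≤ B := le_ciSup (Set.finite_range _).bddAbove
  set S : Finset ι := {j | 0 ≤ u j}
  have hS : IsSignSplit u S :=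
    ⟨fun j hj => (mem_filter.1 hj).2, fun j hj => le_of_not_ge fun h => hj (by simpa [S] using h)⟩
  have hmain : ((Fintype.card ι : ℝ) - 1) * δ ^ 3 * |u i| ≤ 4 * B := by
    rcases le_total (Fintype.card ι) (2 * #S) with hcard | hcard
    · exact hS.mul_abs_le hn hδ₀ hδ₁ ht hcard hB i
    · have hcard' : Fintype.card ι ≤ 2 * #Sᶜ := by
        have := card_compl_add_card S
        omega
      simpa using hS.neg_compl.mul_abs_le hn hδ₀ hδ₁ ht hcard'
        (fun j => by simpa only [linearizedDegree_neg, abs_neg] using hB j) i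
  have hn' : (4 : ℝ) ≤ Fintype.card ι := by exact_mod_cast hn
  rw [div_div, div_mul_eq_mul_div, le_div_iff₀ (by positivity)]
  have hn₂ : (0 : ℝ) ≤ Fintype.card ι - 2 := by linarith
  nlinarith [mul_nonneg (mul_nonneg (pow_nonneg hδ₀.le 3) (abs_nonneg (u i))) hn₂]

end LinearizedDegree

section DegreeLinearization

variable {ι : Type*} {F f : ℝ → ℝ} {w : ι → ι → ℝ} {D : Set (ι → ℝ)} {c₁ c₂ : ℝ}

theorem exists_sub_eq_mul_sub_of_mem (hF : ∀ t, HasDerivAt F (f t) t) (hD : Convex ℝ D)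
    (hfD : ∀ α ∈ D, ∀ i j, i ≠ j → f (α i + w i j) ∈ Set.Icc c₂ (1 - c₂))
    {α β : ι → ℝ} (hα : α ∈ D) (hβ : β ∈ D) {i j : ι} (hij : i ≠ j) :
    ∃ φ ∈ Set.Icc c₂ (1 - c₂), F (β i + w i j) - F (α i + w i j) = φ * (β i - α i) := by
  have hconv : Convex ℝ ((fun γ : ι → ℝ => γ i + w i j) '' D) := by
    simpa [Set.image_image, add_comm] using (hD.linear_image (LinearMap.proj i)).translate (w i j)
  obtain ⟨_, ⟨γ, hγ, rfl⟩, h⟩ :=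
    exists_sub_eq_mul_sub_of_convex hF hconv ⟨α, hα, rfl⟩ ⟨β, hβ, rfl⟩
  exact ⟨_, hfD γ hγ i j hij, by rw [h]; ring⟩

variable [Fintype ι] [DecidableEq ι]

theorem exists_linearizedDegree_eq (hF : ∀ t, HasDerivAt F (f t) t) (hD : Convex ℝ D)
    (hc₁ : 0 ≤ c₁) (hc₂ : 0 ≤ c₂)
    (hFD : ∀ α ∈ D, ∀ i j, i ≠ j → F (α i + w i j) ∈ Set.Icc c₁ (1 - c₁))
    (hfD : ∀ α ∈ D, ∀ i j, i ≠ j → f (α i + w i j) ∈ Set.Icc c₂ (1 - c₂))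
    {α β : ι → ℝ} (hα : α ∈ D) (hβ : β ∈ D) :
    ∃ t : ι → ι → ℝ, (∀ i j, i ≠ j → t i j ∈ Set.Icc (c₁ * c₂) 1) ∧ ∀ i,
      ∑ j ∈ univ.erase i, F (β i + w i j) * F (β j + w j i)
        - ∑ j ∈ univ.erase i, F (α i + w i j) * F (α j + w j i)
        = linearizedDegree t (β - α) i := by
  choose! φ hφ hφeq using fun i j (hij : i ≠ j) => exists_sub_eq_mul_sub_of_mem hF hD hfD hα hβ hij
  refine ⟨fun i j => φ i j * ((F (β j + w j i) + F (α j + w j i)) / 2), fun i j hij => ?_,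
    fun i => ?_⟩
  · obtain ⟨hφ₁, hφ₂⟩ := hφ i j hij
    obtain ⟨hβ₁, hβ₂⟩ := hFD β hβ j i hij.symm
    obtain ⟨hα₁, hα₂⟩ := hFD α hα j i hij.symm
    constructor <;> nlinarith
  · rw [← sum_sub_distrib]
    refine sum_congr rfl fun j hj => ?_
    have hji := ne_of_mem_erase hj
    simp only [Pi.sub_apply]
    -- `ab - cd = (a - c)(b + d)/2 + (b - d)(a + c)/2`
    linear_combination (F (β j + w j i) + F (α j + w j i)) / 2 * hφeq i j hji.symm
      + (F (β i + w i j) + F (α i + w i j)) / 2 * hφeq j i hji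

end DegreeLinearization

/-- core of Lemma A.5: deterministic sup-norm error bound for any
root of the degree moment equations, with constants depending only on `c₁, c₂`. -/
theorem sup_norm_error_bound_degree_moment_root
    (c₁ c₂ : ℝ) (hc₁ : c₁ ∈ Set.Ioc (0 : ℝ) (1 / 2)) (hc₂ : c₂ ∈ Set.Ioc (0 : ℝ) (1 / 2)) :
    ∃ C : ℝ, 0 < C ∧ ∃ n₀ : ℕ, 2 ≤ n₀ ∧
      ∀ n K : ℕ, n₀ ≤ n → 1 ≤ K →
        ∀ F f : ℝ → ℝ, (∀ t : ℝ, HasDerivAt F (f t) t) →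
          ∀ (β : Fin K → ℝ) (x : Fin n → Fin n → Fin K → ℝ) (d : Fin n → ℝ)
            (D : Set (Fin n → ℝ)), D.Nonempty → Convex ℝ D →
            (∀ α ∈ D, ∀ i j : Fin n, i ≠ j →
              F (α i + ∑ k, x i j k * β k) ∈ Set.Icc c₁ (1 - c₁)) →
            (∀ α ∈ D, ∀ i j : Fin n, i ≠ j →
              f (α i + ∑ k, x i j k * β k) ∈ Set.Icc c₂ (1 - c₂)) →
            ∀ α₀ αhat : Fin n → ℝ, α₀ ∈ D → αhat ∈ D →
              (∀ i : Fin n,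
                ∑ j ∈ univ.erase i,
                  F (αhat i + ∑ k, x i j k * β k) * F (αhat j + ∑ k, x j i k * β k)
                    = d i) →
              ∀ i : Fin n,
                |αhat i - α₀ i| ≤ (C / (n : ℝ)) *
                  ⨆ i' : Fin n,
                    |d i' - ∑ j ∈ univ.erase i',
                      F (α₀ i' + ∑ k, x i' j k * β k) * F (α₀ j + ∑ k, x j i' k * β k)| := by
  obtain ⟨hc₁₀, hc₁₂⟩ := hc₁
  obtain ⟨hc₂₀, hc₂₂⟩ := hc₂
  refine ⟨8 / (c₁ * c₂) ^ 3, by positivity, 4, by norm_num, ?_⟩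
  intro n K hn _ F f hF β x d D _ hD hFD hfD α₀ αhat hα₀ hαhat hroot i
  obtain ⟨t, ht, hlin⟩ := exists_linearizedDegree_eq (w := fun i j => ∑ k, x i j k * β k)
    hF hD hc₁₀.le hc₂₀.le hFD hfD hα₀ hαhat
  simp only [← hroot, hlin]
  simpa using abs_le_iSup_abs_linearizedDegree (u := αhat - α₀) (by simpa using hn)
    (mul_pos hc₁₀ hc₂₀) (by nlinarith) ht i
end

section
/- Under the dyadic fixed-effects setup, assume additionally that f is differentiable with |f′(α_i + x_{ij}ᵀβ)| ≤ c₃ for all α ∈ D and all i ≠ j, for some constant c₃ > 0. Define, for α ∈ D, the n×n matrix J₁₁(α) with entries [J₁₁(α)]_{ij} = −F_{ij}(α)·f_{ji}(α) for i ≠ j and [J₁₁(α)]_{ii} = −Σ_{j≠i} f_{ij}(α)·F_{ji}(α). Then for all α, α′ ∈ D: ‖J₁₁(α) − J₁₁(α′)‖_∞ ≤ 2(n−1)(1 + c₃)·‖α − α′‖_∞. (Lipschitz continuity of the Jacobian of the degree moment equations, with Lipschitz constant of order n; used in the existence proof of Theorem 3.1.) -/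
open Finset

lemma mvt_abs_bound (g g' : ℝ → ℝ) (hg : ∀ t, HasDerivAt g (g' t) t)
    (C a b : ℝ) (hC : ∀ t ∈ segment ℝ a b, |g' t| ≤ C) :
    |g b - g a| ≤ C * |b - a| := by
  have := (convex_segment a b).norm_image_sub_le_of_norm_hasDerivWithin_le
    (f := g) (f' := g') (fun t _ => (hg t).hasDerivWithinAt)
    (fun t ht => by simpa using hC t ht)
    (left_mem_segment ℝ a b) (right_mem_segment ℝ a b)
  simpa [Real.norm_eq_abs] using this

lemma prod_diff_bound (a b a' b' : ℝ) (hb : |b| ≤ 1) (ha' : |a'| ≤ 1) :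
    |a * b - a' * b'| ≤ |a - a'| + |b - b'| := by
  have h : a * b - a' * b' = (a - a') * b + a' * (b - b') := by ring
  calc |a * b - a' * b'| ≤ |(a - a') * b| + |a' * (b - b')| := by
        rw [h]; exact abs_add_le _ _
    _ ≤ |a - a'| * 1 + 1 * |b - b'| := by
        rw [abs_mul, abs_mul]
        exact add_le_add (mul_le_mul_of_nonneg_left hb (abs_nonneg _))
          (mul_le_mul_of_nonneg_right ha' (abs_nonneg _))
    _ = |a - a'| + |b - b'| := by ring

/-- Lipschitz continuity (in the row-sum matrix norm, with
Lipschitz constant `2(n-1)(1+c₃)` relative to the sup norm on `α`) of the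
Jacobian `J₁₁` of the degree moment equations. -/
theorem jacobian_J11_lipschitz
    (n K : ℕ) (hn : 2 ≤ n) (hK : 1 ≤ K)
    (c₁ c₂ : ℝ) (hc₁ : c₁ ∈ Set.Ioc (0 : ℝ) (1 / 2)) (hc₂ : c₂ ∈ Set.Ioc (0 : ℝ) (1 / 2))
    (F f : ℝ → ℝ) (hFf : ∀ t : ℝ, HasDerivAt F (f t) t)
    (β : Fin K → ℝ) (x : Fin n → Fin n → Fin K → ℝ) (d : Fin n → ℝ)
    (D : Set (Fin n → ℝ)) (hDne : D.Nonempty) (hDconv : Convex ℝ D)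
    (hFbound : ∀ α ∈ D, ∀ i j : Fin n, i ≠ j →
      F (α i + ∑ k, x i j k * β k) ∈ Set.Icc c₁ (1 - c₁))
    (hfbound : ∀ α ∈ D, ∀ i j : Fin n, i ≠ j →
      f (α i + ∑ k, x i j k * β k) ∈ Set.Icc c₂ (1 - c₂))
    (c₃ : ℝ) (hc₃ : 0 < c₃)
    (f' : ℝ → ℝ) (hff' : ∀ t : ℝ, HasDerivAt f (f' t) t)
    (hf'bound : ∀ α ∈ D, ∀ i j : Fin n, i ≠ j →
      |f' (α i + ∑ k, x i j k * β k)| ≤ c₃)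
    (J : (Fin n → ℝ) → Matrix (Fin n) (Fin n) ℝ)
    (hJ : ∀ α : Fin n → ℝ, ∀ i j : Fin n,
      J α i j = if i = j then
          -∑ l ∈ univ.erase i,
            f (α i + ∑ k, x i l k * β k) * F (α l + ∑ k, x l i k * β k)
        else
          -(F (α i + ∑ k, x i j k * β k) * f (α j + ∑ k, x j i k * β k))) :
    ∀ α ∈ D, ∀ α' ∈ D, ∀ i : Fin n,
      ∑ j, |J α i j - J α' i j| ≤
        2 * ((n : ℝ) - 1) * (1 + c₃) * ⨆ l : Fin n, |α l - α' l| := by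
  intro α hα α' hα' i
  set M : ℝ := ⨆ l : Fin n, |α l - α' l| with hM
  have hne : Nonempty (Fin n) := ⟨⟨0, by omega⟩⟩
  have hMle : ∀ l : Fin n, |α l - α' l| ≤ M :=
    fun l => le_ciSup (f := fun l => |α l - α' l|) (Set.Finite.bddAbove (Set.finite_range _)) l
  have hM0 : 0 ≤ M := le_trans (abs_nonneg _) (hMle (Classical.arbitrary _))
  have hc₂' : (0:ℝ) < c₂ := hc₂.1
  have hc₂'' : c₂ ≤ 1/2 := hc₂.2
  have hc₁' : (0:ℝ) < c₁ := hc₁.1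
  have hc₁'' : c₁ ≤ 1/2 := hc₁.2
  -- a point in the segment of arguments comes from a point of D
  have hseg : ∀ (p q : Fin n) (t : ℝ),
      t ∈ segment ℝ (α p + ∑ k, x p q k * β k) (α' p + ∑ k, x p q k * β k) →
      ∃ γ ∈ D, t = γ p + ∑ k, x p q k * β k := by
    intro p q t ht
    obtain ⟨u, v, hu, hv, huv, heq⟩ := ht
    refine ⟨u • α + v • α', hDconv hα hα' hu hv huv, ?_⟩
    simp only [smul_eq_mul] at heq ⊢
    have : (u • α + v • α') p = u * α p + v * α' p := rfl
    rw [this]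
    linear_combination -heq + (∑ k, x p q k * β k) * huv
  -- Lipschitz bounds on F and f terms
  have hFlip : ∀ (p q : Fin n), p ≠ q →
      |F (α p + ∑ k, x p q k * β k) - F (α' p + ∑ k, x p q k * β k)| ≤ |α p - α' p| := by
    intro p q hpq
    have := mvt_abs_bound F f hFf 1 (α p + ∑ k, x p q k * β k)
      (α' p + ∑ k, x p q k * β k) (by
        intro t ht
        obtain ⟨γ, hγ, rfl⟩ := hseg p q t ht
        have h := hfbound γ hγ p q hpq
        rw [abs_le]
        constructor <;> nlinarith [h.1, h.2])
    calc |F (α p + ∑ k, x p q k * β k) - F (α' p + ∑ k, x p q k * β k)|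
        = |F (α' p + ∑ k, x p q k * β k) - F (α p + ∑ k, x p q k * β k)| := abs_sub_comm _ _
      _ ≤ 1 * |(α' p + ∑ k, x p q k * β k) - (α p + ∑ k, x p q k * β k)| := this
      _ = |α p - α' p| := by rw [one_mul, abs_sub_comm]; ring_nf
  have hflip : ∀ (p q : Fin n), p ≠ q →
      |f (α p + ∑ k, x p q k * β k) - f (α' p + ∑ k, x p q k * β k)| ≤ c₃ * |α p - α' p| := by
    intro p q hpq
    have := mvt_abs_bound f f' hff' c₃ (α p + ∑ k, x p q k * β k)
      (α' p + ∑ k, x p q k * β k) (by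
        intro t ht
        obtain ⟨γ, hγ, rfl⟩ := hseg p q t ht
        exact hf'bound γ hγ p q hpq)
    calc |f (α p + ∑ k, x p q k * β k) - f (α' p + ∑ k, x p q k * β k)|
        = |f (α' p + ∑ k, x p q k * β k) - f (α p + ∑ k, x p q k * β k)| := abs_sub_comm _ _
      _ ≤ c₃ * |(α' p + ∑ k, x p q k * β k) - (α p + ∑ k, x p q k * β k)| := this
      _ = c₃ * |α p - α' p| := by rw [abs_sub_comm]; ring_nf
  -- boundedness of F, f values in [0,1]
  have hFabs : ∀ (γ : Fin n → ℝ), γ ∈ D → ∀ (p q : Fin n), p ≠ q →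
      |F (γ p + ∑ k, x p q k * β k)| ≤ 1 := by
    intro γ hγ p q hpq
    have h := hFbound γ hγ p q hpq
    rw [abs_le]; constructor <;> nlinarith [h.1, h.2]
  have hfabs : ∀ (γ : Fin n → ℝ), γ ∈ D → ∀ (p q : Fin n), p ≠ q →
      |f (γ p + ∑ k, x p q k * β k)| ≤ 1 := by
    intro γ hγ p q hpq
    have h := hfbound γ hγ p q hpq
    rw [abs_le]; constructor <;> nlinarith [h.1, h.2]
  -- off-diagonal terms
  have hoff : ∀ j : Fin n, j ≠ i → |J α i j - J α' i j| ≤ (1 + c₃) * M := by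
    intro j hji
    have hij : i ≠ j := hji.symm
    rw [hJ α i j, hJ α' i j, if_neg hij, if_neg hij]
    have h1 : |-(F (α i + ∑ k, x i j k * β k) * f (α j + ∑ k, x j i k * β k)) -
        -(F (α' i + ∑ k, x i j k * β k) * f (α' j + ∑ k, x j i k * β k))| =
        |F (α i + ∑ k, x i j k * β k) * f (α j + ∑ k, x j i k * β k) -
         F (α' i + ∑ k, x i j k * β k) * f (α' j + ∑ k, x j i k * β k)| := by
      rw [← abs_neg]; ring_nf
    rw [h1]
    calc _ ≤ |F (α i + ∑ k, x i j k * β k) - F (α' i + ∑ k, x i j k * β k)| +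
            |f (α j + ∑ k, x j i k * β k) - f (α' j + ∑ k, x j i k * β k)| :=
          prod_diff_bound _ _ _ _ (hfabs α hα j i hji) (hFabs α' hα' i j hij)
      _ ≤ |α i - α' i| + c₃ * |α j - α' j| := add_le_add (hFlip i j hij) (hflip j i hji)
      _ ≤ M + c₃ * M := add_le_add (hMle i) (mul_le_mul_of_nonneg_left (hMle j) hc₃.le)
      _ = (1 + c₃) * M := by ring
  -- diagonal term
  have hdiag : |J α i i - J α' i i| ≤ ((n:ℝ) - 1) * ((1 + c₃) * M) := by
    rw [hJ α i i, hJ α' i i, if_pos rfl, if_pos rfl]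
    have h1 : |(-∑ l ∈ univ.erase i, f (α i + ∑ k, x i l k * β k) * F (α l + ∑ k, x l i k * β k))
        - -∑ l ∈ univ.erase i, f (α' i + ∑ k, x i l k * β k) * F (α' l + ∑ k, x l i k * β k)| =
        |∑ l ∈ univ.erase i, (f (α i + ∑ k, x i l k * β k) * F (α l + ∑ k, x l i k * β k)
          - f (α' i + ∑ k, x i l k * β k) * F (α' l + ∑ k, x l i k * β k))| := by
      rw [Finset.sum_sub_distrib, ← abs_neg]; ring_nf
    rw [h1]
    calc _ ≤ ∑ l ∈ univ.erase i, |f (α i + ∑ k, x i l k * β k) * F (α l + ∑ k, x l i k * β k)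
          - f (α' i + ∑ k, x i l k * β k) * F (α' l + ∑ k, x l i k * β k)| :=
        Finset.abs_sum_le_sum_abs _ _
      _ ≤ ∑ l ∈ univ.erase i, (1 + c₃) * M := by
        apply Finset.sum_le_sum
        intro l hl
        have hli : l ≠ i := Finset.ne_of_mem_erase hl
        have hil : i ≠ l := hli.symm
        calc _ ≤ |f (α i + ∑ k, x i l k * β k) - f (α' i + ∑ k, x i l k * β k)| +
              |F (α l + ∑ k, x l i k * β k) - F (α' l + ∑ k, x l i k * β k)| :=
            prod_diff_bound _ _ _ _ (hFabs α hα l i hli) (hfabs α' hα' i l hil)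
          _ ≤ c₃ * |α i - α' i| + |α l - α' l| := add_le_add (hflip i l hil) (hFlip l i hli)
          _ ≤ c₃ * M + M := add_le_add (mul_le_mul_of_nonneg_left (hMle i) hc₃.le) (hMle l)
          _ = (1 + c₃) * M := by ring
      _ = ((n:ℝ) - 1) * ((1 + c₃) * M) := by
        rw [Finset.sum_const, Finset.card_erase_of_mem (mem_univ i), Finset.card_univ,
          Fintype.card_fin, nsmul_eq_mul]
        have : ((n - 1 : ℕ) : ℝ) = (n:ℝ) - 1 := by
          rw [Nat.cast_sub (by omega)]; simp
        rw [this]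
  calc ∑ j, |J α i j - J α' i j|
      = |J α i i - J α' i i| + ∑ j ∈ univ.erase i, |J α i j - J α' i j| :=
        (Finset.add_sum_erase univ _ (mem_univ i)).symm
    _ ≤ ((n:ℝ) - 1) * ((1 + c₃) * M) + ∑ j ∈ univ.erase i, (1 + c₃) * M := by
        refine add_le_add hdiag (Finset.sum_le_sum fun j hj => hoff j (Finset.ne_of_mem_erase hj))
    _ = ((n:ℝ) - 1) * ((1 + c₃) * M) + ((n:ℝ) - 1) * ((1 + c₃) * M) := by
        rw [Finset.sum_const, Finset.card_erase_of_mem (mem_univ i), Finset.card_univ,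
          Fintype.card_fin, nsmul_eq_mul]
        have : ((n - 1 : ℕ) : ℝ) = (n:ℝ) - 1 := by
          rw [Nat.cast_sub (by omega)]; simp
        rw [this]
    _ = 2 * ((n : ℝ) - 1) * (1 + c₃) * M := by ring
end
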